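/- arXiv:2411.19294 — 3 statements merged into one kernel-verified Lean document; each statement's English description precedes it below -/
import Mathlib

section
/- For natural numbers r ≥ 1 and n ≥ 2, and i ∈ {0,1}: D_r^{(i)}(n) = r·D_{r−1}^{(1−i)}(n−1) + (n−1)·D_r^{(1−i)}(n−2) + (n+r−1)·D_r^{(1−i)}(n−1), with D_r^{(i)}(n)=0 for n<r and D_r^{(i)}(r) = (r!/2)(1+(−1)^{r+i}). -/
open scoped Classical

/-- Parity of a permutation: `0` if even, `1` if odd. -/
noncomputable def parity {α : Type*} [Fintype α] [DecidableEq α] (σ : Equiv.Perm α) : ℕ :=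
  if Equiv.Perm.sign σ = 1 then 0 else 1

/-- The set `𝒟(r,u,m,n)`: permutations `σ` of `{0,…,r+n-1}` (modelling `{1,…,r+n}`,
with the first `r` elements playing the role of `{1,…,r}`) such that `σ x = y` for exactly
`u` pairs `(x,y)` with `x, y` among the first `r` elements, and exactly `m` elements among
the last `n` elements are fixed points. -/
noncomputable def Dgen (r u m n : ℕ) : Finset (Equiv.Perm (Fin (r + n))) :=
  Finset.univ.filter (fun σ =>
    ((Finset.univ : Finset (Fin (r + n))).filter
      (fun x : Fin (r + n) => (x : ℕ) < r ∧ ((σ x : ℕ) < r))).card = u ∧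
    ((Finset.univ : Finset (Fin (r + n))).filter
      (fun t : Fin (r + n) => r ≤ (t : ℕ) ∧ σ t = t)).card = m)

/-- The set `𝒟_{r,u,m}(n)`: permutations `σ` of `{0,…,r+n-1}` in which any two distinct
elements among the first `r` lie in disjoint cycles, exactly `u` of the first `r` elements
are fixed points, and exactly `m` of the last `n` elements are fixed points. -/
noncomputable def Drum (r u m n : ℕ) : Finset (Equiv.Perm (Fin (r + n))) :=
  Finset.univ.filter (fun σ =>
    (∀ x y : Fin (r + n), (x : ℕ) < r → (y : ℕ) < r → x ≠ y → ¬ σ.SameCycle x y) ∧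
    ((Finset.univ : Finset (Fin (r + n))).filter
      (fun z : Fin (r + n) => (z : ℕ) < r ∧ σ z = z)).card = u ∧
    ((Finset.univ : Finset (Fin (r + n))).filter
      (fun t : Fin (r + n) => r ≤ (t : ℕ) ∧ σ t = t)).card = m)

/-- The number of disjoint cycles of `σ` containing at least one of the first `r` elements:
we count the distinct sets `{y : y is in the same cycle of σ as x}` for `x` among the
first `r` elements. -/
noncomputable def touchingCycles (r n : ℕ) (σ : Equiv.Perm (Fin (r + n))) : ℕ :=
  (((Finset.univ : Finset (Fin (r + n))).filter (fun x : Fin (r + n) => (x : ℕ) < r)).image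
    (fun x => (Finset.univ : Finset (Fin (r + n))).filter (fun y => σ.SameCycle x y))).card

/-- The set of `r`-derangements of length `r+n`: fixed-point-free permutations in which
any two distinct elements among the first `r` lie in disjoint cycles. -/
noncomputable def rDerSet (r n : ℕ) : Finset (Equiv.Perm (Fin (r + n))) :=
  Finset.univ.filter (fun σ =>
    (∀ x, σ x ≠ x) ∧
    (∀ x y : Fin (r + n), (x : ℕ) < r → (y : ℕ) < r → x ≠ y → ¬ σ.SameCycle x y))

/-- `D_r(n)`, the number of `r`-derangements. -/
noncomputable def Dr (r n : ℕ) : ℕ := (rDerSet r n).card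

/-- `D_r^{(i)}(n)`, the number of `r`-derangements of parity `i`. -/
noncomputable def Dri (r i n : ℕ) : ℕ :=
  ((rDerSet r n).filter (fun σ => parity σ = i)).card

open Equiv Equiv.Perm Finset

noncomputable def DSet (r M i : ℕ) : Finset (Equiv.Perm (Fin M)) :=
  Finset.univ.filter (fun σ =>
    ((∀ x, σ x ≠ x) ∧
     (∀ x y : Fin M, (x : ℕ) < r → (y : ℕ) < r → x ≠ y → ¬ σ.SameCycle x y)) ∧
    parity σ = i)

lemma Dri_eq_DSet (r n i M : ℕ) (h : M = r + n) : Dri r i n = (DSet r M i).card := by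
  subst h
  unfold Dri rDerSet DSet
  rw [Finset.filter_filter]

lemma parity_flip {M N : ℕ} (σ : Equiv.Perm (Fin M)) (τ : Equiv.Perm (Fin N))
    (h : Equiv.Perm.sign σ = - Equiv.Perm.sign τ)
    (i : ℕ) (hi : i ≤ 1) : (parity σ = i ↔ parity τ = 1 - i) := by
  have hne : (-1 : ℤˣ) ≠ 1 := by decide
  unfold parity
  rcases Int.units_eq_one_or (Equiv.Perm.sign τ) with h1 | h1 <;>
    rw [h, h1] <;> simp [hne] <;> omega

lemma pow_agree {M : ℕ} {g h : Equiv.Perm (Fin M)} {P : Fin M → Prop}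
    (hP : ∀ x, P x → g x = h x ∧ P (g x)) :
    ∀ (k : ℕ) (x), P x → (g ^ k) x = (h ^ k) x ∧ P ((g ^ k) x) := by
  intro k
  induction k with
  | zero => simp
  | succ k ih =>
    intro x hx
    have h1 := hP x hx
    rw [pow_succ, pow_succ, Equiv.Perm.mul_apply, Equiv.Perm.mul_apply]
    refine ⟨?_, (ih (g x) h1.2).2⟩
    rw [(ih (g x) h1.2).1, h1.1]

lemma sameCycle_congr_of_agree {M : ℕ} {g h : Equiv.Perm (Fin M)} {P : Fin M → Prop}
    (hgh : ∀ x, P x → g x = h x ∧ P (g x)) (hhg : ∀ x, P x → h x = g x ∧ P (h x))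
    {x y} (hx : P x) : g.SameCycle x y ↔ h.SameCycle x y := by
  constructor
  · rintro hs
    obtain ⟨k, -, rfl⟩ := hs.exists_pow_eq'
    exact ⟨k, by rw [zpow_natCast, (pow_agree hgh k x hx).1]⟩
  · rintro hs
    obtain ⟨k, -, rfl⟩ := hs.exists_pow_eq'
    exact ⟨k, by rw [zpow_natCast, (pow_agree hhg k x hx).1]⟩

lemma not_sameCycle_of_invariant {M : ℕ} {g : Equiv.Perm (Fin M)} {P : Fin M → Prop}
    (hg : ∀ x, P x → P (g x)) {x y} (hx : P x) (hy : ¬ P y) : ¬ g.SameCycle x y := by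
  intro hs
  obtain ⟨k, -, rfl⟩ := hs.exists_pow_eq'
  exact hy ((pow_agree (g := g) (h := g) (fun x hx => ⟨rfl, hg x hx⟩) k x hx).2)

lemma splice_pow₁ {M : ℕ} {g h : Equiv.Perm (Fin M)} {z w : Fin M}
    (hw : g w = z) (hgz : g z ≠ z) (hhw : h w = g z)
    (hagree : ∀ x, x ≠ z → x ≠ w → h x = g x) :
    ∀ (k : ℕ) (x), x ≠ z → ∃ m : ℕ, (h ^ m) x = if (g ^ k) x = z then w else (g ^ k) x := by
  intro k
  induction k with
  | zero => intro x hx; exact ⟨0, by simp [hx]⟩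
  | succ k ih =>
    intro x hx
    obtain ⟨m, hm⟩ := ih x hx
    rw [pow_succ', Equiv.Perm.mul_apply]
    by_cases hb : (g ^ k) x = z
    · rw [hb, if_neg hgz]
      rw [if_pos hb] at hm
      exact ⟨m + 1, by rw [pow_succ', Equiv.Perm.mul_apply, hm, hhw]⟩
    · rw [if_neg hb] at hm
      by_cases hbw : (g ^ k) x = w
      · rw [hbw, hw, if_pos rfl]
        exact ⟨m, by rw [hm, hbw]⟩
      · have hgb : g ((g ^ k) x) ≠ z := fun hc => hbw (g.injective (hc.trans hw.symm))
        rw [if_neg hgb]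
        exact ⟨m + 1, by rw [pow_succ', Equiv.Perm.mul_apply, hm, hagree _ hb hbw]⟩

lemma splice_pow₂ {M : ℕ} {g h : Equiv.Perm (Fin M)} {z w : Fin M}
    (hw : g w = z) (hhw : h w = g z)
    (hagree : ∀ x, x ≠ z → x ≠ w → h x = g x)
    (hne : ∀ x, x ≠ z → h x ≠ z) :
    ∀ (m : ℕ) (x), x ≠ z → ∃ k : ℕ, (g ^ k) x = (h ^ m) x ∧ (h ^ m) x ≠ z := by
  intro m
  induction m with
  | zero => intro x hx; exact ⟨0, rfl, hx⟩
  | succ m ih =>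
    intro x hx
    obtain ⟨k, hk, hkz⟩ := ih x hx
    rw [pow_succ', Equiv.Perm.mul_apply]
    refine ⟨if (h ^ m) x = w then k + 2 else k + 1, ?_, hne _ hkz⟩
    by_cases hbw : (h ^ m) x = w
    · rw [if_pos hbw, pow_succ', pow_succ', Equiv.Perm.mul_apply, Equiv.Perm.mul_apply, hk, hbw,
        hw, hhw.symm]
    · rw [if_neg hbw, pow_succ', Equiv.Perm.mul_apply, hk, hagree _ hkz hbw]

lemma sameCycle_splice {M : ℕ} {g h : Equiv.Perm (Fin M)} {z w : Fin M}
    (hw : g w = z) (hgz : g z ≠ z) (hhw : h w = g z)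
    (hagree : ∀ x, x ≠ z → x ≠ w → h x = g x)
    (hne : ∀ x, x ≠ z → h x ≠ z) {x y} (hx : x ≠ z) (hy : y ≠ z) :
    g.SameCycle x y ↔ h.SameCycle x y := by
  constructor
  · intro hs
    obtain ⟨k, -, hk⟩ := hs.exists_pow_eq'
    obtain ⟨m, hm⟩ := splice_pow₁ hw hgz hhw hagree k x hx
    rw [hk, if_neg hy] at hm
    exact ⟨m, by rw [zpow_natCast, hm]⟩
  · intro hs
    obtain ⟨k, -, hk⟩ := hs.exists_pow_eq'
    obtain ⟨m, hm, -⟩ := splice_pow₂ hw hhw hagree hne k x hx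
    exact ⟨m, by rw [zpow_natCast, hm, hk]⟩
def zl (s m : ℕ) : Fin (s+m+3) := ⟨s+m+2, by omega⟩

def emb2 (s m : ℕ) : Fin (s+m+2) ≃ {y : Fin (s+m+3) // y ≠ zl s m} where
  toFun x := ⟨⟨x.1, by omega⟩, by
    intro hc
    have : (x : ℕ) = s+m+2 := congrArg Fin.val hc
    omega⟩
  invFun y := ⟨y.1.1, by
    have h1 : (y.1 : ℕ) < s+m+3 := y.1.2
    have h2 : (y.1 : ℕ) ≠ s+m+2 := fun hc => y.2 (Fin.ext hc)
    omega⟩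
  left_inv x := rfl
  right_inv y := rfl

def emb1 (s m : ℕ) (j : Fin (s+m+3)) (hj : (j : ℕ) < s+m+2) :
    Fin (s+m+1) ≃ {y : Fin (s+m+3) // y ≠ j ∧ y ≠ zl s m} where
  toFun x := ⟨⟨if (x : ℕ) < (j : ℕ) then (x : ℕ) else (x : ℕ) + 1, by split <;> omega⟩, by
    constructor <;> intro hc <;> have h := congrArg Fin.val hc <;>
      simp only [zl] at h <;> split at h <;> omega⟩
  invFun y := ⟨if (y.1 : ℕ) < (j : ℕ) then (y.1 : ℕ) else (y.1 : ℕ) - 1, by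
    have h1 : (y.1 : ℕ) < s+m+3 := y.1.2
    have h2 : (y.1 : ℕ) ≠ (j : ℕ) := fun hc => y.2.1 (Fin.ext hc)
    have h3 : (y.1 : ℕ) ≠ s+m+2 := fun hc => y.2.2 (Fin.ext hc)
    split <;> omega⟩
  left_inv x := by
    have h1 : (x : ℕ) < s+m+1 := x.2
    apply Fin.ext
    simp only []
    split_ifs <;> omega
  right_inv y := by
    have h1 : (y.1 : ℕ) < s+m+3 := y.1.2
    have h2 : (y.1 : ℕ) ≠ (j : ℕ) := fun hc => y.2.1 (Fin.ext hc)
    have h3 : (y.1 : ℕ) ≠ s+m+2 := fun hc => y.2.2 (Fin.ext hc)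
    apply Subtype.ext
    apply Fin.ext
    simp only []
    split_ifs <;> omega

lemma extendDomain_restrict {M K : ℕ} {p : Fin M → Prop} [DecidablePred p]
    (f : Fin K ≃ Subtype p) (π : Equiv.Perm (Fin M)) (hp : ∀ y, p y ↔ p (π y))
    (hfix : ∀ y, ¬ p y → π y = y) :
    Equiv.Perm.extendDomain (f.symm.permCongr (π.subtypePerm (fun y => (hp y).symm))) f = π := by
  ext b
  by_cases hb : p b
  · have hb2 : b = ((f (f.symm ⟨b, hb⟩)) : Fin M) := by simp
    rw [hb2, Equiv.Perm.extendDomain_apply_image]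
    simp [Equiv.permCongr_apply, Equiv.Perm.subtypePerm_apply]
  · rw [Equiv.Perm.extendDomain_apply_not_subtype _ _ hb, hfix b hb]
lemma mem_DSet {r M i : ℕ} (σ : Equiv.Perm (Fin M)) :
    σ ∈ DSet r M i ↔
      ((∀ x, σ x ≠ x) ∧
       (∀ x y : Fin M, (x : ℕ) < r → (y : ℕ) < r → x ≠ y → ¬ σ.SameCycle x y)) ∧
      parity σ = i := by
  unfold DSet
  simp

lemma emb2_coe (s m : ℕ) (x : Fin (s+m+2)) :
    (((emb2 s m) x : {y : Fin (s+m+3) // y ≠ zl s m}) : Fin (s+m+3)) = ⟨(x : ℕ), by omega⟩ := rfl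

lemma emb2_coe_val (s m : ℕ) (x : Fin (s+m+2)) :
    ((((emb2 s m) x : {y : Fin (s+m+3) // y ≠ zl s m}) : Fin (s+m+3)) : ℕ) = (x : ℕ) := rfl

lemma emb2_symm_val (s m : ℕ) (y : {y : Fin (s+m+3) // y ≠ zl s m}) :
    (((emb2 s m).symm y : Fin (s+m+2)) : ℕ) = ((y : Fin (s+m+3)) : ℕ) := rfl

lemma zl_val (s m : ℕ) : ((zl s m : Fin (s+m+3)) : ℕ) = s+m+2 := rfl

lemma mem_iff_2 (s m i : ℕ) (hi : i ≤ 1) (w : Fin (s+m+3)) (hw : w ≠ zl s m)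
    (τ : Equiv.Perm (Fin (s+m+2))) :
    (Equiv.Perm.extendDomain τ (emb2 s m) * Equiv.swap w (zl s m)) ∈
      (DSet (s+1) (s+m+3) i).filter (fun σ => σ w = zl s m ∧ σ (zl s m) ≠ w)
    ↔ τ ∈ DSet (s+1) (s+m+2) (1-i) := by
  classical
  set z := zl s m with hzdef
  set f := emb2 s m with hfdef
  set E := Equiv.Perm.extendDomain τ f with hEdef
  set σ := E * Equiv.swap w z with hsdef
  have hpz : ¬ (z ≠ z) := fun h => h rfl
  have hEz : E z = z := Equiv.Perm.extendDomain_apply_not_subtype τ f hpz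
  have himg : ∀ x : Fin (s+m+2), E ((f x : {y : Fin (s+m+3) // y ≠ z}) : Fin (s+m+3))
      = ((f (τ x) : {y : Fin (s+m+3) // y ≠ z}) : Fin (s+m+3)) :=
    fun x => Equiv.Perm.extendDomain_apply_image τ f x
  have hcoe : ∀ (y : Fin (s+m+3)) (hy : y ≠ z),
      ((f ((f.symm ⟨y, hy⟩ : Fin (s+m+2))) : {y : Fin (s+m+3) // y ≠ z}) : Fin (s+m+3)) = y := by
    intro y hy
    rw [Equiv.apply_symm_apply]
  have hEval : ∀ (y : Fin (s+m+3)) (hy : y ≠ z),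
      E y = ((f (τ (f.symm ⟨y, hy⟩)) : {y : Fin (s+m+3) // y ≠ z}) : Fin (s+m+3)) := by
    intro y hy
    conv_lhs => rw [← hcoe y hy]
    exact himg _
  have hEne : ∀ y, y ≠ z → E y ≠ z := fun y hy => by
    rw [hEval y hy]; exact (f _).2
  have hwz : w ≠ z := hw
  have hσw : σ w = z := by
    rw [hsdef, Equiv.Perm.mul_apply, Equiv.swap_apply_left, hEz]
  have hσz : σ z = E w := by
    rw [hsdef, Equiv.Perm.mul_apply, Equiv.swap_apply_right]
  have hσy : ∀ y, y ≠ w → y ≠ z → σ y = E y := fun y h1 h2 => by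
    rw [hsdef, Equiv.Perm.mul_apply, Equiv.swap_apply_of_ne_of_ne h1 h2]
  have hσzne : σ z ≠ z := by rw [hσz]; exact hEne w hw
  -- sign
  have hsign : Equiv.Perm.sign σ = - Equiv.Perm.sign τ := by
    rw [hsdef, Equiv.Perm.sign_mul, Equiv.Perm.sign_swap hwz, Equiv.Perm.sign_extendDomain,
      mul_neg_one]
  have hpar : parity σ = i ↔ parity τ = 1 - i := parity_flip σ τ hsign i hi
  -- fixed points
  have hfpf : ((∀ x, σ x ≠ x) ∧ σ z ≠ w) ↔ (∀ x, τ x ≠ x) := by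
    constructor
    · rintro ⟨h1, h2⟩ x
      by_cases hxw : ((f x : {y : Fin (s+m+3) // y ≠ z}) : Fin (s+m+3)) = w
      · intro hc
        apply h2
        rw [hσz]
        have hx2 : f.symm ⟨w, hw⟩ = x := by
          have hfx : f x = ⟨w, hw⟩ := Subtype.ext hxw
          rw [← hfx, Equiv.symm_apply_apply]
        rw [hEval w hw, hx2, hc, hxw]
      · intro hc
        apply h1 ((f x : {y : Fin (s+m+3) // y ≠ z}) : Fin (s+m+3))
        rw [hσy _ hxw (f x).2, himg, hc]
    · intro h
      constructor
      · intro y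
        by_cases h1 : y = z
        · rw [h1]; exact hσzne
        · by_cases h2 : y = w
          · rw [h2, hσw]; exact fun hc => hw hc.symm
          · rw [hσy y h2 h1, hEval y h1]
            intro hc
            apply h (f.symm ⟨y, h1⟩)
            apply f.injective
            apply Subtype.ext
            rw [hc]
            exact (hcoe y h1).symm
      · rw [hσz, hEval w hw]
        intro hc
        apply h (f.symm ⟨w, hw⟩)
        apply f.injective
        apply Subtype.ext
        rw [hc]
        exact (hcoe w hw).symm
  -- same cycle bridge
  have hsplice : ∀ x y : Fin (s+m+3), x ≠ z → y ≠ z →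
      (σ.SameCycle x y ↔ E.SameCycle x y) := by
    intro x y hx hy
    refine sameCycle_splice hσw hσzne hσz.symm ?_ hEne hx hy
    intro a h1 h2
    exact (hσy a h2 h1).symm
  have hznotsmall : ¬ ((z : ℕ) < s + 1) := by rw [hzdef, zl_val]; omega
  have hcyc : (∀ x y : Fin (s+m+3), (x : ℕ) < s+1 → (y : ℕ) < s+1 → x ≠ y → ¬ σ.SameCycle x y)
      ↔ (∀ x y : Fin (s+m+2), (x : ℕ) < s+1 → (y : ℕ) < s+1 → x ≠ y → ¬ τ.SameCycle x y) := by
    constructor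
    · intro hc x y hx hy hne2 hsc
      have hfx := (f x).2
      have hfy := (f y).2
      refine hc ((f x : {y : Fin (s+m+3) // y ≠ z}) : Fin (s+m+3))
        ((f y : {y : Fin (s+m+3) // y ≠ z}) : Fin (s+m+3)) ?_ ?_ ?_ ?_
      · rw [emb2_coe_val]; exact hx
      · rw [emb2_coe_val]; exact hy
      · intro hc2
        exact hne2 (f.injective (Subtype.ext hc2))
      · exact (hsplice _ _ hfx hfy).mpr ((Equiv.Perm.sameCycle_extendDomain).mpr hsc)
    · intro hc x y hx hy hne2 hsc
      have hxz : x ≠ z := fun h2 => hznotsmall (h2 ▸ hx)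
      have hyz : y ≠ z := fun h2 => hznotsmall (h2 ▸ hy)
      have hEsc : E.SameCycle x y := (hsplice x y hxz hyz).mp hsc
      rw [← hcoe x hxz, ← hcoe y hyz] at hEsc
      have := (Equiv.Perm.sameCycle_extendDomain).mp hEsc
      refine hc (f.symm ⟨x, hxz⟩) (f.symm ⟨y, hyz⟩) ?_ ?_ ?_ this
      · rw [emb2_symm_val]; exact hx
      · rw [emb2_symm_val]; exact hy
      · intro hc2
        have := congrArg f hc2
        simp at this
        exact hne2 this
  -- assemble
  rw [Finset.mem_filter, mem_DSet, mem_DSet]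
  constructor
  · rintro ⟨⟨⟨h1, h2⟩, h3⟩, h4, h5⟩
    exact ⟨⟨hfpf.mp ⟨h1, h5⟩, hcyc.mp h2⟩, hpar.mp h3⟩
  · rintro ⟨⟨h1, h2⟩, h3⟩
    exact ⟨⟨⟨(hfpf.mpr h1).1, hcyc.mpr h2⟩, hpar.mpr h3⟩, hσw, (hfpf.mpr h1).2⟩
lemma fiber2 (s m i : ℕ) (hi : i ≤ 1) (w : Fin (s+m+3)) (hw : w ≠ zl s m) :
    ((DSet (s+1) (s+m+3) i).filter (fun σ => σ w = zl s m ∧ σ (zl s m) ≠ w)).card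
      = (DSet (s+1) (s+m+2) (1-i)).card := by
  classical
  symm
  apply Finset.card_bij
    (fun τ _ => Equiv.Perm.extendDomain τ (emb2 s m) * Equiv.swap w (zl s m))
  · intro τ hτ
    exact (mem_iff_2 s m i hi w hw τ).mpr hτ
  · intro τ1 h1 τ2 h2 heq
    have h3 := mul_right_cancel heq
    exact Equiv.Perm.extendDomainHom_injective (emb2 s m) h3
  · intro σ hσ
    have hmem := Finset.mem_filter.mp hσ
    set z := zl s m with hz
    set π := σ * Equiv.swap w z with hπ
    have hπz : π z = z := by
      rw [hπ, Equiv.Perm.mul_apply, Equiv.swap_apply_right, hmem.2.1]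
    have hp : ∀ y : Fin (s+m+3), (y ≠ z) ↔ (π y ≠ z) := by
      intro y
      constructor
      · intro hy hc
        exact hy (π.injective (hc.trans hπz.symm))
      · intro hy hc
        rw [hc] at hy
        exact hy hπz
    have hfix : ∀ y : Fin (s+m+3), ¬ (y ≠ z) → π y = y := by
      intro y hy
      rw [not_not.mp hy, hπz]
    refine ⟨(emb2 s m).symm.permCongr (π.subtypePerm (fun y => (hp y).symm)), ?_, ?_⟩
    · have hBτ : Equiv.Perm.extendDomain ((emb2 s m).symm.permCongr (π.subtypePerm (fun y => (hp y).symm)))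
          (emb2 s m) * Equiv.swap w z = σ := by
        rw [extendDomain_restrict (emb2 s m) π hp hfix, hπ, mul_assoc, Equiv.swap_mul_self,
          mul_one]
      exact (mem_iff_2 s m i hi w hw _).mp (by rw [hBτ]; exact hσ)
    · rw [extendDomain_restrict (emb2 s m) π hp hfix, hπ, mul_assoc, Equiv.swap_mul_self,
        mul_one]
lemma emb1_coe_val (s m : ℕ) (j : Fin (s+m+3)) (hj : (j : ℕ) < s+m+2) (x : Fin (s+m+1)) :
    ((((emb1 s m j hj) x : {y : Fin (s+m+3) // y ≠ j ∧ y ≠ zl s m}) : Fin (s+m+3)) : ℕ)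
      = if (x : ℕ) < (j : ℕ) then (x : ℕ) else (x : ℕ) + 1 := rfl

lemma mem_iff_1 (s m i : ℕ) (hi : i ≤ 1) (j : Fin (s+m+3)) (hj : (j : ℕ) < s+m+2) (r' : ℕ)
    (hr' : ∀ k : ℕ, k < s+m+1 → ((if k < (j : ℕ) then k else k+1) < s+1 ↔ k < r'))
    (τ : Equiv.Perm (Fin (s+m+1))) :
    (Equiv.swap j (zl s m) * Equiv.Perm.extendDomain τ (emb1 s m j hj)) ∈
      (DSet (s+1) (s+m+3) i).filter (fun σ => σ (zl s m) = j ∧ σ j = zl s m)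
    ↔ τ ∈ DSet r' (s+m+1) (1-i) := by
  classical
  set z := zl s m with hzdef
  set f := emb1 s m j hj with hfdef
  set E := Equiv.Perm.extendDomain τ f with hEdef
  set σ := Equiv.swap j z * E with hsdef
  have hjz : j ≠ z := by
    intro hc
    have := congrArg Fin.val hc
    rw [zl_val] at this
    omega
  have hEj : E j = j := Equiv.Perm.extendDomain_apply_not_subtype τ f (fun h => h.1 rfl)
  have hEz : E z = z := Equiv.Perm.extendDomain_apply_not_subtype τ f (fun h => h.2 rfl)
  have himg : ∀ x : Fin (s+m+1), E ((f x : {y : Fin (s+m+3) // y ≠ j ∧ y ≠ z}) : Fin (s+m+3))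
      = ((f (τ x) : {y : Fin (s+m+3) // y ≠ j ∧ y ≠ z}) : Fin (s+m+3)) :=
    fun x => Equiv.Perm.extendDomain_apply_image τ f x
  have hcoe : ∀ (y : Fin (s+m+3)) (hy : y ≠ j ∧ y ≠ z),
      ((f ((f.symm ⟨y, hy⟩ : Fin (s+m+1))) : {y : Fin (s+m+3) // y ≠ j ∧ y ≠ z})
        : Fin (s+m+3)) = y := by
    intro y hy
    rw [Equiv.apply_symm_apply]
  have hEval : ∀ (y : Fin (s+m+3)) (hy : y ≠ j ∧ y ≠ z),
      E y = ((f (τ (f.symm ⟨y, hy⟩)) : {y : Fin (s+m+3) // y ≠ j ∧ y ≠ z}) : Fin (s+m+3)) := by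
    intro y hy
    conv_lhs => rw [← hcoe y hy]
    exact himg _
  have hEp : ∀ (y : Fin (s+m+3)), (y ≠ j ∧ y ≠ z) → (E y ≠ j ∧ E y ≠ z) := by
    intro y hy
    rw [hEval y hy]
    exact (f _).2
  have hσj : σ j = z := by
    rw [hsdef, Equiv.Perm.mul_apply, hEj, Equiv.swap_apply_left]
  have hσz : σ z = j := by
    rw [hsdef, Equiv.Perm.mul_apply, hEz, Equiv.swap_apply_right]
  have hσy : ∀ y, (y ≠ j ∧ y ≠ z) → σ y = E y := fun y hy => by
    rw [hsdef, Equiv.Perm.mul_apply, Equiv.swap_apply_of_ne_of_ne (hEp y hy).1 (hEp y hy).2]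
  have hsign : Equiv.Perm.sign σ = - Equiv.Perm.sign τ := by
    rw [hsdef, Equiv.Perm.sign_mul, Equiv.Perm.sign_swap hjz, Equiv.Perm.sign_extendDomain,
      neg_one_mul]
  have hpar : parity σ = i ↔ parity τ = 1 - i := parity_flip σ τ hsign i hi
  -- fixed points
  have hfpf : (∀ x, σ x ≠ x) ↔ (∀ x, τ x ≠ x) := by
    constructor
    · intro h1 x hc
      apply h1 ((f x : {y : Fin (s+m+3) // y ≠ j ∧ y ≠ z}) : Fin (s+m+3))
      rw [hσy _ (f x).2, himg, hc]
    · intro h y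
      by_cases h1 : y = j
      · rw [h1, hσj]; exact fun hc => hjz hc.symm
      · by_cases h2 : y = z
        · rw [h2, hσz]; exact fun hc => hjz hc
        · rw [hσy y ⟨h1, h2⟩, hEval y ⟨h1, h2⟩]
          intro hc
          apply h (f.symm ⟨y, ⟨h1, h2⟩⟩)
          apply f.injective
          apply Subtype.ext
          rw [hc]
          exact (hcoe y ⟨h1, h2⟩).symm
  -- same cycle bridge
  have hP1 : ∀ x : Fin (s+m+3), (x ≠ j ∧ x ≠ z) → σ x = E x ∧ (σ x ≠ j ∧ σ x ≠ z) := by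
    intro x hx
    refine ⟨hσy x hx, ?_⟩
    rw [hσy x hx]
    exact hEp x hx
  have hP2 : ∀ x : Fin (s+m+3), (x ≠ j ∧ x ≠ z) → E x = σ x ∧ (E x ≠ j ∧ E x ≠ z) := by
    intro x hx
    exact ⟨(hσy x hx).symm, hEp x hx⟩
  have hbridge : ∀ x y : Fin (s+m+3), (x ≠ j ∧ x ≠ z) →
      (σ.SameCycle x y ↔ E.SameCycle x y) := by
    intro x y hx
    exact sameCycle_congr_of_agree hP1 hP2 hx
  have hznotsmall : ¬ ((z : ℕ) < s + 1) := by rw [hzdef, zl_val]; omega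
  have hcyc : (∀ x y : Fin (s+m+3), (x : ℕ) < s+1 → (y : ℕ) < s+1 → x ≠ y → ¬ σ.SameCycle x y)
      ↔ (∀ x y : Fin (s+m+1), (x : ℕ) < r' → (y : ℕ) < r' → x ≠ y → ¬ τ.SameCycle x y) := by
    constructor
    · intro hc x y hx hy hne2 hsc
      refine hc ((f x : {y : Fin (s+m+3) // y ≠ j ∧ y ≠ z}) : Fin (s+m+3))
        ((f y : {y : Fin (s+m+3) // y ≠ j ∧ y ≠ z}) : Fin (s+m+3)) ?_ ?_ ?_ ?_
      · rw [emb1_coe_val]; exact (hr' x x.2).mpr hx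
      · rw [emb1_coe_val]; exact (hr' y y.2).mpr hy
      · intro hc2
        exact hne2 (f.injective (Subtype.ext hc2))
      · exact (hbridge _ _ (f x).2).mpr ((Equiv.Perm.sameCycle_extendDomain).mpr hsc)
    · intro hc x y hx hy hne2 hsc
      have hxz : x ≠ z := fun h2 => hznotsmall (h2 ▸ hx)
      have hyz : y ≠ z := fun h2 => hznotsmall (h2 ▸ hy)
      by_cases hxj : x = j
      · have hyj : y ≠ j := fun h2 => hne2 (hxj.trans h2.symm)
        rw [hxj] at hsc
        exact not_sameCycle_of_invariant (g := σ) (P := fun a => a ≠ j ∧ a ≠ z)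
          (fun a ha => (hP1 a ha).2) ⟨hyj, hyz⟩ (fun h2 => h2.1 rfl) hsc.symm
      · by_cases hyj : y = j
        · exact not_sameCycle_of_invariant (g := σ) (P := fun a => a ≠ j ∧ a ≠ z)
            (fun a ha => (hP1 a ha).2) ⟨hxj, hxz⟩ (by rw [hyj]; exact fun h2 => h2.1 rfl) hsc
        · have hEsc : E.SameCycle x y := (hbridge x y ⟨hxj, hxz⟩).mp hsc
          rw [← hcoe x ⟨hxj, hxz⟩, ← hcoe y ⟨hyj, hyz⟩] at hEsc
          have hτsc := (Equiv.Perm.sameCycle_extendDomain).mp hEsc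
          refine hc (f.symm ⟨x, ⟨hxj, hxz⟩⟩) (f.symm ⟨y, ⟨hyj, hyz⟩⟩) ?_ ?_ ?_ hτsc
          · have hv := emb1_coe_val s m j hj (f.symm ⟨x, ⟨hxj, hxz⟩⟩)
            rw [hcoe x ⟨hxj, hxz⟩] at hv
            have := hr' ((f.symm ⟨x, ⟨hxj, hxz⟩⟩ : Fin (s+m+1)) : ℕ)
              (f.symm ⟨x, ⟨hxj, hxz⟩⟩).2
            rw [← hv] at this
            exact this.mp hx
          · have hv := emb1_coe_val s m j hj (f.symm ⟨y, ⟨hyj, hyz⟩⟩)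
            rw [hcoe y ⟨hyj, hyz⟩] at hv
            have := hr' ((f.symm ⟨y, ⟨hyj, hyz⟩⟩ : Fin (s+m+1)) : ℕ)
              (f.symm ⟨y, ⟨hyj, hyz⟩⟩).2
            rw [← hv] at this
            exact this.mp hy
          · intro hc2
            have := congrArg f hc2
            simp at this
            exact hne2 this
  rw [Finset.mem_filter, mem_DSet, mem_DSet]
  constructor
  · rintro ⟨⟨⟨h1, h2⟩, h3⟩, h4, h5⟩
    exact ⟨⟨hfpf.mp h1, hcyc.mp h2⟩, hpar.mp h3⟩
  · rintro ⟨⟨h1, h2⟩, h3⟩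
    exact ⟨⟨⟨hfpf.mpr h1, hcyc.mpr h2⟩, hpar.mpr h3⟩, hσz, hσj⟩

lemma fiber1 (s m i : ℕ) (hi : i ≤ 1) (j : Fin (s+m+3)) (hj : (j : ℕ) < s+m+2) (r' : ℕ)
    (hr' : ∀ k : ℕ, k < s+m+1 → ((if k < (j : ℕ) then k else k+1) < s+1 ↔ k < r')) :
    ((DSet (s+1) (s+m+3) i).filter (fun σ => σ (zl s m) = j ∧ σ j = zl s m)).card
      = (DSet r' (s+m+1) (1-i)).card := by
  classical
  symm
  apply Finset.card_bij
    (fun τ _ => Equiv.swap j (zl s m) * Equiv.Perm.extendDomain τ (emb1 s m j hj))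
  · intro τ hτ
    exact (mem_iff_1 s m i hi j hj r' hr' τ).mpr hτ
  · intro τ1 h1 τ2 h2 heq
    have h3 := mul_left_cancel heq
    exact Equiv.Perm.extendDomainHom_injective (emb1 s m j hj) h3
  · intro σ hσ
    have hmem := Finset.mem_filter.mp hσ
    set z := zl s m with hz
    set π := Equiv.swap j z * σ with hπ
    have hπj : π j = j := by
      rw [hπ, Equiv.Perm.mul_apply, hmem.2.2, Equiv.swap_apply_right]
    have hπz : π z = z := by
      rw [hπ, Equiv.Perm.mul_apply, hmem.2.1, Equiv.swap_apply_left]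
    have hp : ∀ y : Fin (s+m+3), (y ≠ j ∧ y ≠ z) ↔ (π y ≠ j ∧ π y ≠ z) := by
      intro y
      constructor
      · intro hy
        exact ⟨fun hc => hy.1 (π.injective (hc.trans hπj.symm)),
          fun hc => hy.2 (π.injective (hc.trans hπz.symm))⟩
      · intro hy
        constructor
        · intro hc; rw [hc] at hy; exact hy.1 hπj
        · intro hc; rw [hc] at hy; exact hy.2 hπz
    have hfix : ∀ y : Fin (s+m+3), ¬ (y ≠ j ∧ y ≠ z) → π y = y := by
      intro y hy
      rcases not_and_or.mp hy with h1 | h1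
      · rw [not_not.mp h1, hπj]
      · rw [not_not.mp h1, hπz]
    refine ⟨(emb1 s m j hj).symm.permCongr (π.subtypePerm (fun y => (hp y).symm)), ?_, ?_⟩
    · have hBτ : Equiv.swap j z * Equiv.Perm.extendDomain
          ((emb1 s m j hj).symm.permCongr (π.subtypePerm (fun y => (hp y).symm))) (emb1 s m j hj) = σ := by
        rw [extendDomain_restrict (emb1 s m j hj) π hp hfix, hπ, ← mul_assoc,
          Equiv.swap_mul_self, one_mul]
      exact (mem_iff_1 s m i hi j hj r' hr' _).mp (by rw [hBτ]; exact hσ)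
    · rw [extendDomain_restrict (emb1 s m j hj) π hp hfix, hπ, ← mul_assoc,
        Equiv.swap_mul_self, one_mul]
lemma sum_if_lt (n c a b : ℕ) (h : c ≤ n) :
    (∑ k ∈ Finset.range n, if k < c then a else b) = c * a + (n - c) * b := by
  induction n with
  | zero =>
    have : c = 0 := by omega
    subst this
    simp
  | succ n ih =>
    by_cases hc : c ≤ n
    · rw [Finset.sum_range_succ, ih hc, if_neg (by omega)]
      have h2 : n + 1 - c = (n - c) + 1 := by omega
      rw [h2]
      ring
    · have hceq : c = n + 1 := by omega
      have hall : ∀ k ∈ Finset.range (n+1), (if k < c then a else b) = a := fun k hk =>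
        if_pos (by have := Finset.mem_range.mp hk; omega)
      rw [Finset.sum_congr rfl hall, Finset.sum_const, Finset.card_range, smul_eq_mul, hceq]
      simp

lemma card_filter_lt (M c : ℕ) (h : c ≤ M) :
    ((Finset.univ : Finset (Fin M)).filter (fun x : Fin M => (x : ℕ) < c)).card = c := by
  have hb : ((Finset.univ : Finset (Fin M)).filter (fun x : Fin M => (x : ℕ) < c)).card
      = (Finset.range c).card := by
    apply Finset.card_bij (fun (x : Fin M) _ => (x : ℕ))
    · intro a ha
      exact Finset.mem_range.mpr (Finset.mem_filter.mp ha).2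
    · intro a _ b _ hab
      exact Fin.ext hab
    · intro k hk
      refine ⟨⟨k, by have := Finset.mem_range.mp hk; omega⟩, ?_, rfl⟩
      exact Finset.mem_filter.mpr ⟨Finset.mem_univ _, Finset.mem_range.mp hk⟩
  rw [hb, Finset.card_range]

lemma key (s m i : ℕ) (hi : i ≤ 1) :
    (DSet (s+1) (s+m+3) i).card
      = (s+1) * (DSet s (s+m+1) (1-i)).card + (m+1) * (DSet (s+1) (s+m+1) (1-i)).card
        + (s+m+2) * (DSet (s+1) (s+m+2) (1-i)).card := by
  classical
  set z := zl s m with hz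
  set S := DSet (s+1) (s+m+3) i with hS
  have hfpfS : ∀ σ ∈ S, ∀ x, σ x ≠ x := fun σ hσ => ((mem_DSet σ).mp hσ).1.1
  have hsplit := Finset.card_filter_add_card_filter_not
    (s := S) (p := fun σ => σ (σ z) = z)
  -- part A : 2-cycles through z
  have hA : (S.filter (fun σ => σ (σ z) = z)).card
      = ∑ j : Fin (s+m+3),
          ((S.filter (fun σ => σ (σ z) = z)).filter (fun σ => σ z = j)).card :=
    Finset.card_eq_sum_card_fiberwise (fun σ _ => Finset.mem_univ (σ z))
  have hAfib : ∀ j : Fin (s+m+3),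
      ((S.filter (fun σ => σ (σ z) = z)).filter (fun σ => σ z = j)).card
      = if (j : ℕ) < s+1 then (DSet s (s+m+1) (1-i)).card
        else if (j : ℕ) < s+m+2 then (DSet (s+1) (s+m+1) (1-i)).card else 0 := by
    intro j
    by_cases hj : (j : ℕ) < s+m+2
    · have hfilter : (S.filter (fun σ => σ (σ z) = z)).filter (fun σ => σ z = j)
          = S.filter (fun σ => σ z = j ∧ σ j = z) := by
        rw [Finset.filter_filter]
        apply Finset.filter_congr
        intro σ hσ
        constructor
        · rintro ⟨h1, h2⟩
          exact ⟨h2, by rw [← h2]; exact h1⟩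
        · rintro ⟨h1, h2⟩
          exact ⟨by rw [h1]; exact h2, h1⟩
      rw [hfilter]
      by_cases hjs : (j : ℕ) < s+1
      · rw [if_pos hjs]
        exact fiber1 s m i hi j hj s (fun k hk => by split <;> omega)
      · rw [if_neg hjs, if_pos hj]
        exact fiber1 s m i hi j hj (s+1) (fun k hk => by split <;> omega)
    · have hv : (j : ℕ) = s+m+2 := by have := j.2; omega
      have hjz : j = z := by
        apply Fin.ext
        rw [hv, hz, zl_val]
      rw [if_neg (by omega), if_neg (by omega)]
      apply Finset.card_eq_zero.mpr
      apply Finset.filter_eq_empty_iff.mpr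
      intro σ hσ
      rw [hjz]
      exact fun hc => hfpfS σ (Finset.mem_filter.mp hσ).1 z hc
  -- part B : splices
  have hB : (S.filter (fun σ => ¬ σ (σ z) = z)).card
      = ∑ w : Fin (s+m+3),
          ((S.filter (fun σ => ¬ σ (σ z) = z)).filter (fun σ => σ.symm z = w)).card :=
    Finset.card_eq_sum_card_fiberwise (fun σ _ => Finset.mem_univ (σ.symm z))
  have hBfib : ∀ w : Fin (s+m+3),
      ((S.filter (fun σ => ¬ σ (σ z) = z)).filter (fun σ => σ.symm z = w)).card
      = if w = z then 0 else (DSet (s+1) (s+m+2) (1-i)).card := by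
    intro w
    by_cases hw : w = z
    · rw [if_pos hw]
      apply Finset.card_eq_zero.mpr
      apply Finset.filter_eq_empty_iff.mpr
      intro σ hσ
      rw [hw]
      intro hc
      have : σ z = z := by
        conv_lhs => rw [← hc]
        rw [Equiv.apply_symm_apply]
      exact hfpfS σ (Finset.mem_filter.mp hσ).1 z this
    · rw [if_neg hw]
      have hfilter : (S.filter (fun σ => ¬ σ (σ z) = z)).filter (fun σ => σ.symm z = w)
          = S.filter (fun σ => σ w = z ∧ σ z ≠ w) := by
        rw [Finset.filter_filter]
        apply Finset.filter_congr
        intro σ hσ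
        constructor
        · rintro ⟨h1, h2⟩
          have hw2 : σ w = z := by rw [← h2, Equiv.apply_symm_apply]
          exact ⟨hw2, fun hc => h1 (by rw [hc, hw2])⟩
        · rintro ⟨h1, h2⟩
          refine ⟨fun hc => h2 (σ.injective (hc.trans h1.symm)), ?_⟩
          rw [← h1, Equiv.symm_apply_apply]
      rw [hfilter]
      exact fiber2 s m i hi w hw
  -- sums
  have hsumA : (∑ j : Fin (s+m+3),
      (if (j : ℕ) < s+1 then (DSet s (s+m+1) (1-i)).card
        else if (j : ℕ) < s+m+2 then (DSet (s+1) (s+m+1) (1-i)).card else 0))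
      = (s+1) * (DSet s (s+m+1) (1-i)).card + (m+1) * (DSet (s+1) (s+m+1) (1-i)).card := by
    rw [Fin.sum_univ_eq_sum_range (fun k => if k < s+1 then (DSet s (s+m+1) (1-i)).card
        else if k < s+m+2 then (DSet (s+1) (s+m+1) (1-i)).card else 0)]
    have h3 : s+m+3 = (s+m+2)+1 := by omega
    rw [h3, Finset.sum_range_succ, if_neg (by omega), if_neg (by omega), add_zero]
    have hcongr : ∀ k ∈ Finset.range (s+m+2),
        (if k < s+1 then (DSet s (s+m+1) (1-i)).card
          else if k < s+m+2 then (DSet (s+1) (s+m+1) (1-i)).card else 0)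
        = (if k < s+1 then (DSet s (s+m+1) (1-i)).card
            else (DSet (s+1) (s+m+1) (1-i)).card) := by
      intro k hk
      have := Finset.mem_range.mp hk
      by_cases h : k < s+1
      · rw [if_pos h, if_pos h]
      · rw [if_neg h, if_neg h, if_pos this]
    rw [Finset.sum_congr rfl hcongr, sum_if_lt _ _ _ _ (by omega)]
    have h4 : s+m+2-(s+1) = m+1 := by omega
    rw [h4]
  have hsumB : (∑ w : Fin (s+m+3), if w = z then 0 else (DSet (s+1) (s+m+2) (1-i)).card)
      = (s+m+2) * (DSet (s+1) (s+m+2) (1-i)).card := by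
    rw [← Finset.add_sum_erase _ _ (Finset.mem_univ z), if_pos rfl, zero_add]
    have hcongr : ∀ w ∈ Finset.univ.erase z,
        (if w = z then 0 else (DSet (s+1) (s+m+2) (1-i)).card)
        = (DSet (s+1) (s+m+2) (1-i)).card := fun w hw => if_neg (Finset.ne_of_mem_erase hw)
    rw [Finset.sum_congr rfl hcongr, Finset.sum_const, smul_eq_mul]
    rw [Finset.card_erase_of_mem (Finset.mem_univ z), Finset.card_univ, Fintype.card_fin]
    congr 1
  have eA : (S.filter (fun σ => σ (σ z) = z)).card
      = (s+1) * (DSet s (s+m+1) (1-i)).card + (m+1) * (DSet (s+1) (s+m+1) (1-i)).card := by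
    rw [hA, Finset.sum_congr rfl (fun j _ => hAfib j), hsumA]
  have eB : (S.filter (fun σ => ¬ σ (σ z) = z)).card
      = (s+m+2) * (DSet (s+1) (s+m+2) (1-i)).card := by
    rw [hB, Finset.sum_congr rfl (fun w _ => hBfib w), hsumB]
  rw [← hsplit, eA, eB]
lemma small_to_large {r n : ℕ} (σ : Equiv.Perm (Fin (r+n))) (hσ : σ ∈ rDerSet r n) :
    ∀ x : Fin (r+n), (x : ℕ) < r → r ≤ (σ x : ℕ) := by
  obtain ⟨hfpf, hcyc⟩ := (Finset.mem_filter.mp hσ).2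
  intro x hx
  by_contra hlt
  push_neg at hlt
  exact hcyc x (σ x) hx hlt (fun hc => hfpf x hc.symm) ⟨1, by simp⟩

lemma rDerSet_empty (r n : ℕ) (h : n < r) : rDerSet r n = ∅ := by
  classical
  rw [Finset.eq_empty_iff_forall_notMem]
  intro σ hσ
  have hkey := small_to_large σ hσ
  have hsub : (Finset.univ.filter (fun x : Fin (r+n) => (x : ℕ) < r)).image σ
      ⊆ Finset.univ.filter (fun x : Fin (r+n) => ¬ (x : ℕ) < r) := by
    intro y hy
    obtain ⟨x, hx, rfl⟩ := Finset.mem_image.mp hy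
    refine Finset.mem_filter.mpr ⟨Finset.mem_univ _, ?_⟩
    have := hkey x (Finset.mem_filter.mp hx).2
    omega
  have hcard1 : ((Finset.univ.filter (fun x : Fin (r+n) => (x : ℕ) < r)).image σ).card = r := by
    rw [Finset.card_image_of_injective _ σ.injective, card_filter_lt _ _ (by omega)]
  have hcard2 := Finset.card_le_card hsub
  have hcard3 : (Finset.univ.filter (fun x : Fin (r+n) => ¬ (x : ℕ) < r)).card = n := by
    have := Finset.card_filter_add_card_filter_not
      (s := (Finset.univ : Finset (Fin (r+n)))) (p := fun x => (x : ℕ) < r)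
    rw [card_filter_lt _ _ (by omega), Finset.card_univ, Fintype.card_fin] at this
    omega
  rw [hcard1, hcard3] at hcard2
  omega

lemma struct_of_mem (r : ℕ) (σ : Equiv.Perm (Fin (r+r))) (hσ : σ ∈ rDerSet r r) :
    (∀ x : Fin (r+r), (x : ℕ) < r → r ≤ (σ x : ℕ)) ∧
    (∀ t : Fin (r+r), r ≤ (t : ℕ) → (σ t : ℕ) < r) ∧
    (∀ x, σ (σ x) = x) := by
  classical
  obtain ⟨hfpf, hcyc⟩ := (Finset.mem_filter.mp hσ).2
  have h1 := small_to_large σ hσ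
  -- image of smalls is exactly larges
  have hsub : (Finset.univ.filter (fun x : Fin (r+r) => (x : ℕ) < r)).image σ
      ⊆ Finset.univ.filter (fun x : Fin (r+r) => ¬ (x : ℕ) < r) := by
    intro y hy
    obtain ⟨x, hx, rfl⟩ := Finset.mem_image.mp hy
    refine Finset.mem_filter.mpr ⟨Finset.mem_univ _, ?_⟩
    have := h1 x (Finset.mem_filter.mp hx).2
    omega
  have hcard1 : ((Finset.univ.filter (fun x : Fin (r+r) => (x : ℕ) < r)).image σ).card = r := by
    rw [Finset.card_image_of_injective _ σ.injective, card_filter_lt _ _ (by omega)]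
  have hcard3 : (Finset.univ.filter (fun x : Fin (r+r) => ¬ (x : ℕ) < r)).card = r := by
    have := Finset.card_filter_add_card_filter_not
      (s := (Finset.univ : Finset (Fin (r+r)))) (p := fun x => (x : ℕ) < r)
    rw [card_filter_lt _ _ (by omega), Finset.card_univ, Fintype.card_fin] at this
    omega
  have himg : (Finset.univ.filter (fun x : Fin (r+r) => (x : ℕ) < r)).image σ
      = Finset.univ.filter (fun x : Fin (r+r) => ¬ (x : ℕ) < r) :=
    Finset.eq_of_subset_of_card_le hsub (by rw [hcard1, hcard3])
  -- involution on smalls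
  have hinvs : ∀ x : Fin (r+r), (x : ℕ) < r → σ (σ x) = x := by
    intro x hx
    by_cases hss : (σ (σ x) : ℕ) < r
    · by_contra hne
      exact hcyc x (σ (σ x)) hx hss (fun hc => hne hc.symm)
        ⟨2, by rw [zpow_two, Equiv.Perm.mul_apply]⟩
    · exfalso
      have hmem : σ (σ x) ∈ Finset.univ.filter (fun x : Fin (r+r) => ¬ (x : ℕ) < r) :=
        Finset.mem_filter.mpr ⟨Finset.mem_univ _, hss⟩
      rw [← himg] at hmem
      obtain ⟨y, hy, hyeq⟩ := Finset.mem_image.mp hmem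
      have hys : (y : ℕ) < r := (Finset.mem_filter.mp hy).2
      have h5 : y = σ x := σ.injective hyeq
      have := h1 x hx
      omega
  have h2 : ∀ t : Fin (r+r), r ≤ (t : ℕ) → (σ t : ℕ) < r := by
    intro t ht
    have hmem : t ∈ Finset.univ.filter (fun x : Fin (r+r) => ¬ (x : ℕ) < r) :=
      Finset.mem_filter.mpr ⟨Finset.mem_univ _, by omega⟩
    rw [← himg] at hmem
    obtain ⟨y, hy, hyeq⟩ := Finset.mem_image.mp hmem
    have hys : (y : ℕ) < r := (Finset.mem_filter.mp hy).2
    rw [← hyeq, hinvs y hys]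
    exact hys
  refine ⟨h1, h2, ?_⟩
  intro t
  by_cases ht : (t : ℕ) < r
  · exact hinvs t ht
  · have hmem : t ∈ Finset.univ.filter (fun x : Fin (r+r) => ¬ (x : ℕ) < r) :=
      Finset.mem_filter.mpr ⟨Finset.mem_univ _, ht⟩
    rw [← himg] at hmem
    obtain ⟨y, hy, hyeq⟩ := Finset.mem_image.mp hmem
    have hys : (y : ℕ) < r := (Finset.mem_filter.mp hy).2
    rw [← hyeq]
    exact congrArg σ (hinvs y hys)

lemma sign_of_mem (r : ℕ) (hr : 1 ≤ r) (σ : Equiv.Perm (Fin (r+r))) (hσ : σ ∈ rDerSet r r) :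
    Equiv.Perm.sign σ = (-1)^r := by
  classical
  obtain ⟨hfpf, hcyc⟩ := (Finset.mem_filter.mp hσ).2
  have hinv := (struct_of_mem r σ hσ).2.2
  have hsq : σ * σ = 1 := Equiv.ext fun x => hinv x
  have hne1 : σ ≠ 1 := by
    intro hc
    have := hfpf ⟨0, by omega⟩
    rw [hc] at this
    exact this rfl
  haveI : Fact (Nat.Prime 2) := ⟨Nat.prime_two⟩
  have horder : orderOf σ = 2 := orderOf_eq_prime (by rw [pow_two]; exact hsq) hne1
  have hct : ∀ c ∈ σ.cycleType, c = 2 := by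
    intro c hc
    have h2 : 2 ≤ c := Equiv.Perm.two_le_of_mem_cycleType hc
    have hdvd : c ∣ 2 := by
      rw [← horder, ← Equiv.Perm.lcm_cycleType]
      exact Multiset.dvd_lcm hc
    exact le_antisymm (Nat.le_of_dvd (by norm_num) hdvd) h2
  have hsupp : σ.support = Finset.univ := by
    rw [Finset.eq_univ_iff_forall]
    intro x
    exact Equiv.Perm.mem_support.mpr (hfpf x)
  have hsum : σ.cycleType.sum = r + r := by
    rw [Equiv.Perm.sum_cycleType, hsupp, Finset.card_univ, Fintype.card_fin]
  have hrep : σ.cycleType = Multiset.replicate (Multiset.card σ.cycleType) 2 :=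
    Multiset.eq_replicate_card.mpr hct
  have hcard : Multiset.card σ.cycleType = r := by
    have h6 := hsum
    rw [hrep, Multiset.sum_replicate, smul_eq_mul] at h6
    omega
  rw [Equiv.Perm.sign_of_cycleType, hsum, hcard,
    show r + r + r = 2*r + r by ring, pow_add, pow_mul, Int.units_sq, one_pow, one_mul]

lemma sameCycle_invol {M : ℕ} (σ : Equiv.Perm (Fin M)) (hsq : ∀ x, σ (σ x) = x) {x y : Fin M}
    (h : σ.SameCycle x y) : y = x ∨ y = σ x := by
  obtain ⟨k, -, hk⟩ := h.exists_pow_eq'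
  have hpow : ∀ (q : ℕ) (a : Fin M), (σ ^ (2*q)) a = a := by
    intro q
    induction q with
    | zero => simp
    | succ q ih =>
      intro a
      rw [show 2*(q+1) = 2*q + 2 by ring, pow_add, Equiv.Perm.mul_apply, pow_two,
        Equiv.Perm.mul_apply, hsq, ih]
  rcases Nat.even_or_odd k with ⟨q, hq⟩ | ⟨q, hq⟩
  · left
    rw [← hk, hq, show q + q = 2*q by ring, hpow]
  · right
    rw [← hk, hq, pow_succ, Equiv.Perm.mul_apply, hpow]
def invoFun (r : ℕ) (e : Equiv.Perm (Fin r)) (x : Fin (r+r)) : Fin (r+r) :=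
  if h : (x : ℕ) < r then
    ⟨r + ((e ⟨(x : ℕ), h⟩ : Fin r) : ℕ), by have := (e ⟨(x : ℕ), h⟩).isLt; omega⟩
  else
    Fin.castLE (by omega) (e.symm ⟨(x : ℕ) - r, by have := x.isLt; omega⟩)

lemma invoFun_invol (r : ℕ) (e : Equiv.Perm (Fin r)) (x : Fin (r+r)) :
    invoFun r e (invoFun r e x) = x := by
  apply Fin.ext
  unfold invoFun
  by_cases h : (x : ℕ) < r
  · rw [dif_pos h, dif_neg (by simp)]
    simp
  · rw [dif_neg h, dif_pos (by simp [Fin.castLE])]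
    simp
    omega

def invo (r : ℕ) (e : Equiv.Perm (Fin r)) : Equiv.Perm (Fin (r+r)) where
  toFun := invoFun r e
  invFun := invoFun r e
  left_inv := invoFun_invol r e
  right_inv := invoFun_invol r e

lemma invo_val_small (r : ℕ) (e : Equiv.Perm (Fin r)) (x : Fin (r+r)) (h : (x : ℕ) < r) :
    ((invo r e x) : ℕ) = r + ((e ⟨(x : ℕ), h⟩ : Fin r) : ℕ) := by
  show (invoFun r e x : ℕ) = _
  unfold invoFun
  rw [dif_pos h]

lemma invo_val_large (r : ℕ) (e : Equiv.Perm (Fin r)) (x : Fin (r+r)) (h : ¬ (x : ℕ) < r) :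
    ((invo r e x) : ℕ)
      = ((e.symm ⟨(x : ℕ) - r, by have := x.isLt; omega⟩ : Fin r) : ℕ) := by
  show (invoFun r e x : ℕ) = _
  unfold invoFun
  rw [dif_neg h]
  simp [Fin.castLE]

lemma invo_mem (r : ℕ) (hr : 1 ≤ r) (e : Equiv.Perm (Fin r)) : invo r e ∈ rDerSet r r := by
  classical
  unfold rDerSet
  rw [Finset.mem_filter]
  refine ⟨Finset.mem_univ _, ?_, ?_⟩
  · intro x
    by_cases h : (x : ℕ) < r
    · intro hc
      have hv := invo_val_small r e x h
      rw [hc] at hv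
      omega
    · intro hc
      have hv := invo_val_large r e x h
      rw [hc] at hv
      have h3 : (x : ℕ) < r := by rw [hv]; exact (e.symm _).isLt
      exact h h3
  · intro x y hx hy hxy hsc
    rcases sameCycle_invol (invo r e) (invoFun_invol r e) hsc with h1 | h1
    · exact hxy h1.symm
    · rw [h1] at hy
      rw [invo_val_small r e x hx] at hy
      omega

lemma card_rDerSet (r : ℕ) (hr : 1 ≤ r) : (rDerSet r r).card = Nat.factorial r := by
  classical
  have hb : (Finset.univ : Finset (Equiv.Perm (Fin r))).card = (rDerSet r r).card := by
    apply Finset.card_bij (fun e _ => invo r e)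
    · intro e _
      exact invo_mem r hr e
    · intro e1 _ e2 _ heq
      apply Equiv.ext
      intro x
      have hx : ((Fin.castLE (by omega : r ≤ r + r) x : Fin (r+r)) : ℕ) < r := by
        simp [Fin.castLE]
      have h1 : invo r e1 (Fin.castLE (by omega : r ≤ r + r) x)
          = invo r e2 (Fin.castLE (by omega : r ≤ r + r) x) := by rw [heq]
      have hv1 := invo_val_small r e1 _ hx
      have hv2 := invo_val_small r e2 _ hx
      rw [h1] at hv1
      have h5 := hv1.symm.trans hv2
      have hmk : (⟨((Fin.castLE (by omega : r ≤ r+r) x : Fin (r+r)) : ℕ), hx⟩ : Fin r) = x :=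
        Fin.ext rfl
      rw [hmk] at h5
      exact Fin.ext (by omega)
    · intro σ hσ
      obtain ⟨h1, h2, h3⟩ := struct_of_mem r σ hσ
      have hg : Function.Injective (fun x : Fin r =>
          (⟨(σ (Fin.castLE (by omega : r ≤ r+r) x) : ℕ) - r, by
            have ha := (σ (Fin.castLE (by omega : r ≤ r+r) x)).isLt
            omega⟩ : Fin r)) := by
        intro a b hab
        have ha := h1 (Fin.castLE (by omega : r ≤ r+r) a) (by simp [Fin.castLE])
        have hb := h1 (Fin.castLE (by omega : r ≤ r+r) b) (by simp [Fin.castLE])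
        have hv := congrArg Fin.val hab
        simp only [] at hv
        have h6 : (σ (Fin.castLE (by omega : r ≤ r+r) a) : ℕ)
            = (σ (Fin.castLE (by omega : r ≤ r+r) b) : ℕ) := by omega
        have h7 := σ.injective (Fin.ext h6)
        have h8 := congrArg Fin.val h7
        simp [Fin.castLE] at h8
        exact Fin.ext h8
      set e := Equiv.ofBijective _ (Finite.injective_iff_bijective.mp hg) with he
      refine ⟨e, Finset.mem_univ _, ?_⟩
      apply Equiv.ext
      intro x
      by_cases hx : (x : ℕ) < r
      · apply Fin.ext
        rw [invo_val_small r e x hx]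
        have he2 : ((e ⟨(x : ℕ), hx⟩ : Fin r) : ℕ) = (σ x : ℕ) - r := rfl
        rw [he2]
        have := h1 x hx
        omega
      · apply Fin.ext
        rw [invo_val_large r e x hx]
        have hsx : (σ x : ℕ) < r := h2 x (by omega)
        have hee : e ⟨(σ x : ℕ), hsx⟩ = ⟨(x : ℕ) - r, by have := x.isLt; omega⟩ := by
          apply Fin.ext
          show (σ (Fin.castLE (by omega : r ≤ r+r) ⟨(σ x : ℕ), hsx⟩) : ℕ) - r = (x : ℕ) - r
          have hcl : Fin.castLE (by omega : r ≤ r+r) ⟨(σ x : ℕ), hsx⟩ = σ x := Fin.ext rfl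
          rw [hcl, h3]
        have h9 := congrArg e.symm hee
        rw [Equiv.symm_apply_apply] at h9
        rw [← h9]
  rw [← hb, Finset.card_univ, Fintype.card_perm, Fintype.card_fin]
lemma Dri_base (r i : ℕ) (hr : 1 ≤ r) (hi : i ≤ 1) :
    (2 * Dri r i r : ℤ) = Nat.factorial r * (1 + (-1) ^ (r + i)) := by
  classical
  have hcard := card_rDerSet r hr
  have hpar : ∀ σ ∈ rDerSet r r, parity σ = if Even r then 0 else 1 := by
    intro σ hσ
    have hs := sign_of_mem r hr σ hσ
    unfold parity
    rcases Nat.even_or_odd r with he | ho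
    · rw [if_pos he, if_pos (by rw [hs, he.neg_one_pow])]
    · rw [if_neg (Nat.not_even_iff_odd.mpr ho), if_neg (by rw [hs, ho.neg_one_pow]; decide)]
  unfold Dri
  rcases Nat.even_or_odd r with he | ho
  · have hp2 : ∀ σ ∈ rDerSet r r, parity σ = 0 := fun σ hσ => by
      rw [hpar σ hσ, if_pos he]
    rcases Nat.le_one_iff_eq_zero_or_eq_one.mp hi with rfl | rfl
    · rw [Finset.filter_true_of_mem (fun σ hσ => hp2 σ hσ), hcard]
      have h4 : ((-1 : ℤ)) ^ (r + 0) = 1 := by rw [Nat.add_zero]; exact he.neg_one_pow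
      rw [h4]
      push_cast
      ring
    · rw [Finset.filter_false_of_mem (fun σ hσ => by rw [hp2 σ hσ]; omega), Finset.card_empty]
      have h4 : ((-1 : ℤ)) ^ (r + 1) = -1 := (he.add_one).neg_one_pow
      rw [h4]
      push_cast
      ring
  · have hp2 : ∀ σ ∈ rDerSet r r, parity σ = 1 := fun σ hσ => by
      rw [hpar σ hσ, if_neg (Nat.not_even_iff_odd.mpr ho)]
    rcases Nat.le_one_iff_eq_zero_or_eq_one.mp hi with rfl | rfl
    · rw [Finset.filter_false_of_mem (fun σ hσ => by rw [hp2 σ hσ]; omega), Finset.card_empty]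
      have h4 : ((-1 : ℤ)) ^ (r + 0) = -1 := by rw [Nat.add_zero]; exact ho.neg_one_pow
      rw [h4]
      push_cast
      ring
    · rw [Finset.filter_true_of_mem (fun σ hσ => hp2 σ hσ), hcard]
      have h4 : ((-1 : ℤ)) ^ (r + 1) = 1 := (ho.add_one).neg_one_pow
      rw [h4]
      push_cast
      ring


theorem Dri_recurrence (r n i : ℕ) (hr : 1 ≤ r) (hi : i ≤ 1) :
    (2 ≤ n →
      Dri r i n =
        r * Dri (r - 1) (1 - i) (n - 1) + (n - 1) * Dri r (1 - i) (n - 2) +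
          (n + r - 1) * Dri r (1 - i) (n - 1)) ∧
    (n < r → Dri r i n = 0) ∧
    (2 * Dri r i r : ℤ) = Nat.factorial r * (1 + (-1) ^ (r + i)) := by
  refine ⟨?_, ?_, ?_⟩
  · intro hn
    obtain ⟨s, rfl⟩ : ∃ s, r = s + 1 := ⟨r - 1, by omega⟩
    obtain ⟨m, rfl⟩ : ∃ m, n = m + 2 := ⟨n - 2, by omega⟩
    have h1 : (s+1) - 1 = s := by omega
    have h2 : (m+2) - 1 = m+1 := by omega
    have h3 : (m+2) - 2 = m := by omega
    have h4 : (m+2) + (s+1) - 1 = s+m+2 := by omega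
    rw [h1, h2, h3, h4]
    rw [Dri_eq_DSet (s+1) (m+2) i (s+m+3) (by omega),
      Dri_eq_DSet s (m+1) (1-i) (s+m+1) (by omega),
      Dri_eq_DSet (s+1) m (1-i) (s+m+1) (by omega),
      Dri_eq_DSet (s+1) (m+1) (1-i) (s+m+2) (by omega)]
    exact key s m i hi
  · intro h
    unfold Dri
    rw [rDerSet_empty r n h, Finset.filter_empty, Finset.card_empty]
  · exact Dri_base r i hr hi
end

section
/- Define C_r(n) := D_r^{(1)}(n) − D_r^{(0)}(n). For each natural number r and integers n ≥ r: C_r(n) = (−1)^{n−1} · ∑_{j=r}^{n} (n!/(n−j)!) · C(j−2, r−2), where C(a,b) is a binomial coefficient (with the convention C(−2,−2)=1 and C(j−2,−2)=0 for j>0 when r=0, interpreted via the generating-function definition; for r ≥ 2 this is the ordinary binomial coefficient). -/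
open scoped Classical

/-- `C_r(n) = D_r^{(1)}(n) - D_r^{(0)}(n)`. -/
noncomputable def Cr (r n : ℕ) : ℤ := (Dri r 1 n : ℤ) - (Dri r 0 n : ℤ)

open Equiv Finset

/-- Signed sum over permutations whose fixed-point set is exactly `A` and whose
cycles separate the elements of `s`. -/
noncomputable def W (m : ℕ) (s A : Finset (Fin m)) : ℤ :=
  ∑ σ ∈ Finset.univ.filter (fun σ : Equiv.Perm (Fin m) =>
      (∀ x, σ x = x ↔ x ∈ A) ∧
      ∀ x ∈ s, ∀ y ∈ s, x ≠ y → ¬ σ.SameCycle x y), (Equiv.Perm.sign σ : ℤ)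

lemma Wcond_conj {m : ℕ} {s A : Finset (Fin m)} {σ : Equiv.Perm (Fin m)} (ρ : Equiv.Perm (Fin m))
    (h1 : ∀ x, σ x = x ↔ x ∈ A)
    (h2 : ∀ x ∈ s, ∀ y ∈ s, x ≠ y → ¬ σ.SameCycle x y) :
    (∀ x, (ρ * σ * ρ⁻¹) x = x ↔ x ∈ A.image ρ) ∧
      ∀ x ∈ s.image ρ, ∀ y ∈ s.image ρ, x ≠ y → ¬ (ρ * σ * ρ⁻¹).SameCycle x y := by
  constructor
  · intro x
    have hfix : (ρ * σ * ρ⁻¹) x = x ↔ σ (ρ⁻¹ x) = ρ⁻¹ x := by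
      simp only [Equiv.Perm.mul_apply]
      constructor
      · intro h; conv_rhs => rw [← h]; simp
        rfl
      · intro h; rw [h]; simp
    have hmem : x ∈ A.image ρ ↔ ρ⁻¹ x ∈ A := by
      simp only [Finset.mem_image]
      constructor
      · rintro ⟨a, ha, rfl⟩; simpa using ha
      · intro h; exact ⟨ρ⁻¹ x, h, by simp⟩
    rw [hfix, hmem]; exact h1 _
  · simp only [Finset.mem_image]
    rintro x ⟨a, ha, rfl⟩ y ⟨b, hb, rfl⟩ hne hsc
    rw [Equiv.Perm.sameCycle_conj] at hsc
    simp only [Equiv.Perm.inv_def, Equiv.symm_apply_apply] at hsc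
    exact h2 a ha b hb (fun h => hne (by rw [h])) hsc

lemma W_conj (m : ℕ) (s A : Finset (Fin m)) (ρ : Equiv.Perm (Fin m)) :
    W m (s.image ρ) (A.image ρ) = W m s A := by
  classical
  unfold W
  refine (Finset.sum_nbij' (fun σ => ρ * σ * ρ⁻¹) (fun σ => ρ⁻¹ * σ * ρ) ?_ ?_ ?_ ?_ ?_).symm
  · intro σ hσ
    simp only [Finset.mem_filter, Finset.mem_univ, true_and] at hσ ⊢
    exact Wcond_conj ρ hσ.1 hσ.2
  · intro σ hσ
    simp only [Finset.mem_filter, Finset.mem_univ, true_and] at hσ ⊢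
    have := Wcond_conj ρ⁻¹ hσ.1 hσ.2
    simp only [inv_inv] at this
    have key : ∀ B : Finset (Fin m), Finset.image (⇑ρ⁻¹) (Finset.image (⇑ρ) B) = B := by
      intro B
      rw [Finset.image_image]
      have h : (⇑ρ⁻¹ ∘ ⇑ρ) = id := by funext z; simp
      rw [h, Finset.image_id]
    rwa [key, key] at this
  · intro σ _; group
  · intro σ _; group
  · intro σ _
    norm_cast
    simp [mul_comm, ← mul_assoc]

lemma exists_perm_image {m : ℕ} : ∀ (k : ℕ) (s t : Finset (Fin m)), s.card = k → t.card = k →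
    ∃ ρ : Equiv.Perm (Fin m), s.image ρ = t := by
  intro k
  induction k with
  | zero =>
    intro s t hs ht
    exact ⟨1, by simp [Finset.card_eq_zero.mp hs, Finset.card_eq_zero.mp ht]⟩
  | succ k ih =>
    intro s t hs ht
    obtain ⟨a, ha⟩ := Finset.card_pos.mp (by omega : 0 < s.card)
    obtain ⟨b, hb⟩ := Finset.card_pos.mp (by omega : 0 < t.card)
    obtain ⟨ρ', hρ'⟩ := ih (s.erase a) (t.erase b)
      (by rw [Finset.card_erase_of_mem ha, hs]; rfl)
      (by rw [Finset.card_erase_of_mem hb, ht]; rfl)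
    set u := ρ' a with hu
    have hut : u ∉ t.erase b := by
      intro hmem
      rw [← hρ'] at hmem
      obtain ⟨x, hx, hxe⟩ := Finset.mem_image.mp hmem
      exact (Finset.ne_of_mem_erase hx) (ρ'.injective hxe)
    refine ⟨Equiv.swap u b * ρ', ?_⟩
    have h1 : s = insert a (s.erase a) := (Finset.insert_erase ha).symm
    rw [h1, Finset.image_insert]
    have h2 : Finset.image (⇑(Equiv.swap u b * ρ')) (s.erase a) = t.erase b := by
      have hc : ⇑(Equiv.swap u b * ρ') = ⇑(Equiv.swap u b) ∘ ⇑ρ' := rfl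
      rw [hc, ← Finset.image_image, hρ']
      ext y
      simp only [Finset.mem_image]
      constructor
      · rintro ⟨x, hx, rfl⟩
        rwa [Equiv.swap_apply_of_ne_of_ne (fun h => hut (by rwa [← h])) (Finset.ne_of_mem_erase hx)]
      · intro hy
        exact ⟨y, hy, Equiv.swap_apply_of_ne_of_ne (fun h => hut (by rwa [← h]))
          (Finset.ne_of_mem_erase hy)⟩
    rw [h2]
    have h3 : (Equiv.swap u b * ρ') a = b := by
      simp [Equiv.Perm.mul_apply, ← hu]
    rw [h3, Finset.insert_erase hb]

lemma exists_perm_image_point {m : ℕ} (s t : Finset (Fin m)) (h : s.card = t.card)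
    (a b : Fin m) (hab : a ∈ s ↔ b ∈ t) :
    ∃ ρ : Equiv.Perm (Fin m), s.image ρ = t ∧ ρ a = b := by
  obtain ⟨ρ', hρ'⟩ := exists_perm_image s.card s t rfl h.symm
  set u := ρ' a with hu
  refine ⟨Equiv.swap u b * ρ', ?_, by simp [Equiv.Perm.mul_apply, ← hu]⟩
  have himg : Finset.image (⇑(Equiv.swap u b * ρ')) s ⊆ t := by
    intro y hy
    simp only [Finset.mem_image, Equiv.Perm.mul_apply] at hy
    obtain ⟨x, hx, rfl⟩ := hy
    have hρx : ρ' x ∈ t := hρ' ▸ Finset.mem_image_of_mem _ hx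
    by_cases hxu : ρ' x = u
    · have hxa : x = a := ρ'.injective hxu
      rw [hxu, Equiv.swap_apply_left]
      exact hab.mp (hxa ▸ hx)
    · by_cases hxb : ρ' x = b
      · rw [hxb, Equiv.swap_apply_right]
        have hbt : b ∈ t := hxb ▸ hρx
        have has : a ∈ s := hab.mpr hbt
        exact hρ' ▸ Finset.mem_image_of_mem _ has
      · rw [Equiv.swap_apply_of_ne_of_ne hxu hxb]; exact hρx
  apply Finset.eq_of_subset_of_card_le himg
  rw [Finset.card_image_of_injective _ (Equiv.injective _), h]

lemma lift_pow {m : ℕ} (τ : Equiv.Perm (Fin (m+1))) (e : Equiv.Perm (Fin m))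
    (h : ∀ x, τ x.succ = (e x).succ) :
    ∀ (k : ℕ) (x : Fin m), (τ^k) x.succ = ((e^k) x).succ := by
  intro k
  induction k with
  | zero => simp
  | succ k ih =>
    intro x
    rw [pow_succ', pow_succ', Equiv.Perm.mul_apply, Equiv.Perm.mul_apply, ih, h]

lemma lift_sameCycle {m : ℕ} (τ : Equiv.Perm (Fin (m+1))) (e : Equiv.Perm (Fin m))
    (h : ∀ x, τ x.succ = (e x).succ) (x y : Fin m) :
    τ.SameCycle x.succ y.succ ↔ e.SameCycle x y := by
  constructor
  · intro hsc
    obtain ⟨k, -, hk⟩ := hsc.exists_pow_eq'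
    rw [lift_pow τ e h] at hk
    exact ⟨(k : ℤ), by rw [zpow_natCast]; exact Fin.succ_injective _ hk⟩
  · intro hsc
    obtain ⟨k, -, hk⟩ := hsc.exists_pow_eq'
    exact ⟨(k : ℤ), by rw [zpow_natCast, lift_pow τ e h, hk]⟩

lemma fixed_zero_sameCycle {m : ℕ} (σ : Equiv.Perm (Fin (m+1))) (h0 : σ 0 = 0)
    (y : Fin (m+1)) : σ.SameCycle 0 y ↔ y = 0 := by
  constructor
  · rintro ⟨i, rfl⟩
    induction i using Int.induction_on with
    | zero => simp
    | succ k ihk =>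
      rw [zpow_add, Equiv.Perm.mul_apply, zpow_one, h0]
      exact ihk
    | pred k ihk =>
      have h1 : (σ ^ (-1 : ℤ)) 0 = 0 := by
        rw [zpow_neg_one]
        exact σ.injective (by rw [Equiv.Perm.inv_def, Equiv.apply_symm_apply, h0])
      rw [sub_eq_add_neg, zpow_add, Equiv.Perm.mul_apply, h1]
      exact ihk
  · rintro rfl; exact Equiv.Perm.SameCycle.refl _ _

lemma splice_sameCycle {m : ℕ} (σ : Equiv.Perm (Fin (m+1))) (hp : σ 0 ≠ 0)
    {a b : Fin (m+1)} (ha : a ≠ 0) (hb : b ≠ 0) :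
    σ.SameCycle a b ↔ (Equiv.swap 0 (σ 0) * σ).SameCycle a b := by
  set p := σ 0 with hpdef
  set τ := Equiv.swap 0 p * σ with hτ
  have f1 : τ 0 = 0 := by rw [hτ, Equiv.Perm.mul_apply, ← hpdef, Equiv.swap_apply_right]
  have f2 : ∀ x : Fin (m+1), x ≠ 0 → τ x ≠ 0 := fun x hx h =>
    hx (τ.injective (h.trans f1.symm))
  have f3 : ∀ x : Fin (m+1), x ≠ 0 → σ x ≠ p := fun x hx h => hx (σ.injective h)
  have f4 : ∀ x : Fin (m+1), x ≠ 0 → σ x ≠ 0 → τ x = σ x := by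
    intro x hx hσx
    rw [hτ, Equiv.Perm.mul_apply, Equiv.swap_apply_of_ne_of_ne hσx (f3 x hx)]
  have f5 : ∀ x : Fin (m+1), x ≠ 0 → σ x = 0 → τ x = p := by
    intro x _ hσx
    rw [hτ, Equiv.Perm.mul_apply, hσx, Equiv.swap_apply_left]
  constructor
  · intro hsc
    obtain ⟨k, -, hk⟩ := hsc.exists_pow_eq'
    clear hsc
    induction k using Nat.strong_induction_on generalizing b with
    | _ k ih =>
      rcases k with _ | k
      · rw [pow_zero] at hk; exact hk ▸ Equiv.Perm.SameCycle.refl _ _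
      · set c := (σ^k) a with hc
        by_cases hc0 : c = 0
        · rcases k with _ | k'
          · exact absurd (by rw [← hc0, hc, pow_zero]; rfl) ha
          · set d := (σ^k') a with hd
            have hσd : σ d = 0 := by
              rw [hd, ← Equiv.Perm.mul_apply, ← pow_succ', ← hc]; exact hc0
            have hd0 : d ≠ 0 := by
              intro h
              rw [h] at hσd
              exact hp (by rw [hpdef]; exact hσd)
            have ihd : τ.SameCycle a d := ih k' (by omega) hd0 rfl
            have hτd : τ d = p := f5 d hd0 hσd
            have hbp : b = p := by
              rw [← hk, pow_succ', Equiv.Perm.mul_apply, ← hc, hc0]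
            rw [hbp, ← hτd]
            exact ihd.apply_right
        · have ihc : τ.SameCycle a c := ih k (by omega) hc0 rfl
          have hσc : σ c = b := by
            rw [hc, ← Equiv.Perm.mul_apply, ← pow_succ']; exact hk
          have hτc : τ c = b := by rw [f4 c hc0 (by rw [hσc]; exact hb), hσc]
          rw [← hτc]
          exact ihc.apply_right
  · intro hsc
    have aux2 : ∀ k : ℕ, (τ^k) a ≠ 0 ∧ σ.SameCycle a ((τ^k) a) := by
      intro k
      induction k with
      | zero => exact ⟨ha, Equiv.Perm.SameCycle.refl _ _⟩
      | succ k ih =>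
        obtain ⟨hc0, hsck⟩ := ih
        set c := (τ^k) a with hc
        have hstep : (τ^(k+1)) a = τ c := by rw [pow_succ', Equiv.Perm.mul_apply, ← hc]
        refine ⟨by rw [hstep]; exact f2 c hc0, ?_⟩
        rw [hstep]
        by_cases hσc : σ c = 0
        · rw [f5 c hc0 hσc, hpdef, show σ 0 = σ (σ c) from by rw [hσc]]
          exact (hsck.apply_right).apply_right
        · rw [f4 c hc0 hσc]
          exact hsck.apply_right
    obtain ⟨k, -, hk⟩ := hsc.exists_pow_eq'
    exact hk ▸ (aux2 k).2





lemma dF_lift {m : ℕ} (e : Equiv.Perm (Fin m)) (x : Fin m) :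
    (Equiv.Perm.decomposeFin.symm ((0 : Fin (m+1)), e)) x.succ = (e x).succ := by
  rw [Equiv.Perm.decomposeFin_symm_apply_succ]
  simp

lemma W_fix_zero_gen (m : ℕ) (S : Finset (Fin (m+1))) (s' : Finset (Fin m))
    (hS : ∀ x : Fin m, x.succ ∈ S ↔ x ∈ s') :
    W (m+1) S {0} = W m s' ∅ := by
  classical
  unfold W
  rw [Finset.sum_filter, Finset.sum_filter,
    ← Equiv.sum_comp (Equiv.Perm.decomposeFin).symm, Fintype.sum_prod_type, Fin.sum_univ_succ]
  have hrest : ∀ a : Fin m,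
      (∑ e : Equiv.Perm (Fin m),
        (fun σ : Equiv.Perm (Fin (m+1)) => if ((∀ x, σ x = x ↔ x ∈ ({0} : Finset (Fin (m+1)))) ∧
          ∀ x ∈ S, ∀ y ∈ S, x ≠ y → ¬ σ.SameCycle x y) then (Equiv.Perm.sign σ : ℤ) else 0)
          (Equiv.Perm.decomposeFin.symm (a.succ, e))) = 0 := by
    intro a
    apply Finset.sum_eq_zero
    intro e _
    simp only
    rw [if_neg]
    rintro ⟨h1, -⟩
    have := (h1 0).mpr (Finset.mem_singleton_self 0)
    rw [Equiv.Perm.decomposeFin_symm_apply_zero] at this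
    exact (Fin.succ_ne_zero a) this
  rw [Finset.sum_congr rfl (fun a _ => hrest a), Finset.sum_const_zero, add_zero]
  apply Finset.sum_congr rfl
  intro e _
  set σ := Equiv.Perm.decomposeFin.symm ((0 : Fin (m+1)), e) with hσ
  have h0 : σ 0 = 0 := Equiv.Perm.decomposeFin_symm_apply_zero 0 e
  have hcond : ((∀ x, σ x = x ↔ x ∈ ({0} : Finset (Fin (m+1)))) ∧
      ∀ x ∈ S, ∀ y ∈ S, x ≠ y → ¬ σ.SameCycle x y) ↔
      ((∀ x, e x = x ↔ x ∈ (∅ : Finset (Fin m))) ∧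
      ∀ x ∈ s', ∀ y ∈ s', x ≠ y → ¬ e.SameCycle x y) := by
    constructor
    · rintro ⟨h1, h2⟩
      constructor
      · intro x
        simp only [Finset.notMem_empty, iff_false]
        intro hex
        have : σ x.succ = x.succ := by rw [hσ, dF_lift, hex]
        have := (h1 x.succ).mp this
        rw [Finset.mem_singleton] at this
        exact Fin.succ_ne_zero x this
      · intro x hx y hy hxy hsc
        refine h2 x.succ ((hS x).mpr hx) y.succ ((hS y).mpr hy)
          (fun h => hxy (Fin.succ_injective _ h)) ?_
        rw [lift_sameCycle σ e (fun z => by rw [hσ, dF_lift])]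
        exact hsc
    · rintro ⟨h1, h2⟩
      constructor
      · intro x
        simp only [Finset.mem_singleton]
        refine Fin.cases ?_ ?_ x
        · simp [h0]
        · intro i
          simp only [Finset.notMem_empty, iff_false] at h1
          constructor
          · intro h
            rw [hσ, dF_lift] at h
            exact absurd (Fin.succ_injective _ h) (h1 i)
          · intro h; exact absurd h (Fin.succ_ne_zero i)
      · intro x hx y hy hxy hsc
        rcases Fin.eq_zero_or_eq_succ x with rfl | ⟨i, rfl⟩
        · exact hxy ((fixed_zero_sameCycle σ h0 y).mp hsc).symm
        · rcases Fin.eq_zero_or_eq_succ y with rfl | ⟨j, rfl⟩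
          · exact (Fin.succ_ne_zero i) ((fixed_zero_sameCycle σ h0 i.succ).mp hsc.symm)
          · rw [lift_sameCycle σ e (fun z => by rw [hσ, dF_lift])] at hsc
            exact h2 i ((hS i).mp hx) j ((hS j).mp hy) (fun h => hxy (by rw [h])) hsc
  rw [if_congr hcond rfl rfl]
  congr 1
  rw [hσ, Equiv.Perm.decomposeFin.symm_sign, if_pos rfl, one_mul]

lemma W_rec_gen (m : ℕ) (S : Finset (Fin (m+1))) (s' : Finset (Fin m))
    (hS : ∀ x : Fin m, x.succ ∈ S ↔ x ∈ s') (h0S : (0 : Fin (m+1)) ∉ S) :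
    W (m+1) S ∅ = -∑ a : Fin m, (W m s' ∅ + W m s' {a}) := by
  classical
  unfold W
  rw [Finset.sum_filter,
    ← Equiv.sum_comp (Equiv.Perm.decomposeFin).symm, Fintype.sum_prod_type, Fin.sum_univ_succ]
  have hz : (∑ e : Equiv.Perm (Fin m),
      (fun σ : Equiv.Perm (Fin (m+1)) => if ((∀ x, σ x = x ↔ x ∈ (∅ : Finset (Fin (m+1)))) ∧
        ∀ x ∈ S, ∀ y ∈ S, x ≠ y → ¬ σ.SameCycle x y) then (Equiv.Perm.sign σ : ℤ) else 0)
        (Equiv.Perm.decomposeFin.symm ((0 : Fin (m+1)), e))) = 0 := by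
    apply Finset.sum_eq_zero
    intro e _
    simp only
    rw [if_neg]
    rintro ⟨h1, -⟩
    have h00 : Equiv.Perm.decomposeFin.symm ((0 : Fin (m+1)), e) 0 = 0 :=
      Equiv.Perm.decomposeFin_symm_apply_zero 0 e
    have := (h1 0).mp h00
    simp at this
  rw [hz, zero_add]
  have key : ∀ a : Fin m, (∑ e : Equiv.Perm (Fin m),
      (fun σ : Equiv.Perm (Fin (m+1)) => if ((∀ x, σ x = x ↔ x ∈ (∅ : Finset (Fin (m+1)))) ∧
        ∀ x ∈ S, ∀ y ∈ S, x ≠ y → ¬ σ.SameCycle x y) then (Equiv.Perm.sign σ : ℤ) else 0)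
        (Equiv.Perm.decomposeFin.symm (a.succ, e))) = -(W m s' ∅ + W m s' {a}) := by
    intro a
    have step : ∀ e : Equiv.Perm (Fin m),
        (fun σ : Equiv.Perm (Fin (m+1)) => if ((∀ x, σ x = x ↔ x ∈ (∅ : Finset (Fin (m+1)))) ∧
          ∀ x ∈ S, ∀ y ∈ S, x ≠ y → ¬ σ.SameCycle x y) then (Equiv.Perm.sign σ : ℤ) else 0)
          (Equiv.Perm.decomposeFin.symm (a.succ, e)) =
        -((if ((∀ x, e x = x ↔ x ∈ (∅ : Finset (Fin m))) ∧
            ∀ x ∈ s', ∀ y ∈ s', x ≠ y → ¬ e.SameCycle x y) then (Equiv.Perm.sign e : ℤ) else 0) +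
          (if ((∀ x, e x = x ↔ x ∈ ({a} : Finset (Fin m))) ∧
            ∀ x ∈ s', ∀ y ∈ s', x ≠ y → ¬ e.SameCycle x y) then (Equiv.Perm.sign e : ℤ) else 0)) := by
      intro e
      simp only
      set σ := Equiv.Perm.decomposeFin.symm (a.succ, e) with hσ
      have h0 : σ 0 = a.succ := Equiv.Perm.decomposeFin_symm_apply_zero a.succ e
      have h0ne : σ 0 ≠ 0 := by rw [h0]; exact Fin.succ_ne_zero a
      have happ : ∀ x : Fin m, σ x.succ = Equiv.swap 0 a.succ (e x).succ := by
        intro x; rw [hσ]; exact Equiv.Perm.decomposeFin_symm_apply_succ e a.succ x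
      have hsign : (Equiv.Perm.sign σ : ℤ) = -(Equiv.Perm.sign e : ℤ) := by
        rw [hσ, Equiv.Perm.decomposeFin.symm_sign, if_neg (Fin.succ_ne_zero a)]
        push_cast
        ring
      have hτ : ∀ x : Fin m, (Equiv.swap 0 (σ 0) * σ) x.succ = (e x).succ := by
        intro x
        rw [Equiv.Perm.mul_apply, happ, h0, Equiv.swap_apply_self]
      have hSC : ∀ x y : Fin m, σ.SameCycle x.succ y.succ ↔ e.SameCycle x y := by
        intro x y
        rw [splice_sameCycle σ h0ne (Fin.succ_ne_zero x) (Fin.succ_ne_zero y),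
          lift_sameCycle _ e hτ]
      have hcond : ((∀ x, σ x = x ↔ x ∈ (∅ : Finset (Fin (m+1)))) ∧
          ∀ x ∈ S, ∀ y ∈ S, x ≠ y → ¬ σ.SameCycle x y) ↔
          ((∀ x, e x = x → x = a) ∧
            ∀ x ∈ s', ∀ y ∈ s', x ≠ y → ¬ e.SameCycle x y) := by
        constructor
        · rintro ⟨h1, h2⟩
          constructor
          · intro x hex
            by_contra hxa
            have hfix : σ x.succ = x.succ := by
              rw [happ, hex, Equiv.swap_apply_of_ne_of_ne (Fin.succ_ne_zero x)
                (fun h => hxa (Fin.succ_injective _ h))]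
            have := (h1 x.succ).mp hfix
            simp at this
          · intro x hx y hy hxy hsc
            exact h2 x.succ ((hS x).mpr hx) y.succ ((hS y).mpr hy)
              (fun h => hxy (Fin.succ_injective _ h)) ((hSC x y).mpr hsc)
        · rintro ⟨q1, q2⟩
          constructor
          · intro x
            simp only [Finset.notMem_empty, iff_false]
            rcases Fin.eq_zero_or_eq_succ x with rfl | ⟨i, rfl⟩
            · rw [h0]; exact (Fin.succ_ne_zero a)
            · intro hfix
              rw [happ] at hfix
              rcases eq_or_ne (e i) a with hia | hia
              · rw [hia, Equiv.swap_apply_right] at hfix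
                exact Fin.succ_ne_zero i hfix.symm
              · rw [Equiv.swap_apply_of_ne_of_ne (Fin.succ_ne_zero _)
                  (fun h => hia (Fin.succ_injective _ h))] at hfix
                have hei : e i = i := Fin.succ_injective _ hfix
                exact hia (hei.trans (q1 i hei))
          · intro x hx y hy hxy hsc
            rcases Fin.eq_zero_or_eq_succ x with rfl | ⟨i, rfl⟩
            · exact h0S hx
            · rcases Fin.eq_zero_or_eq_succ y with rfl | ⟨j, rfl⟩
              · exact h0S hy
              · exact q2 i ((hS i).mp hx) j ((hS j).mp hy)
                  (fun h => hxy (by rw [h])) ((hSC i j).mp hsc)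
      rw [if_congr hcond rfl rfl]
      by_cases hQ : ((∀ x, e x = x → x = a) ∧
          ∀ x ∈ s', ∀ y ∈ s', x ≠ y → ¬ e.SameCycle x y)
      · rw [if_pos hQ, hsign]
        by_cases hea : e a = a
        · rw [if_neg (fun h => absurd ((h.1 a).mp hea) (Finset.notMem_empty a)),
            if_pos ⟨fun x => ⟨fun hx => Finset.mem_singleton.mpr (hQ.1 x hx),
              fun hx => by rw [Finset.mem_singleton] at hx; rw [hx]; exact hea⟩, hQ.2⟩,
            zero_add]
        · rw [if_pos ⟨fun x => ⟨fun hx => absurd (hQ.1 x hx) (fun h => hea (h ▸ hx)),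
              fun hx => absurd hx (Finset.notMem_empty x)⟩, hQ.2⟩,
            if_neg (fun h => hea ((h.1 a).mpr (Finset.mem_singleton_self a))),
            add_zero]
      · rw [if_neg hQ, if_neg, if_neg]
        · simp
        · rintro ⟨c1, c2⟩
          exact hQ ⟨fun x hx => Finset.mem_singleton.mp ((c1 x).mp hx), c2⟩
        · rintro ⟨c1, c2⟩
          exact hQ ⟨fun x hx => absurd ((c1 x).mp hx) (Finset.notMem_empty x), c2⟩
    rw [Finset.sum_congr rfl (fun e _ => step e)]
    rw [Finset.sum_neg_distrib, Finset.sum_add_distrib]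
    unfold W
    rw [Finset.sum_filter, Finset.sum_filter]
  rw [Finset.sum_congr rfl (fun a _ => key a), ← Finset.sum_neg_distrib]
  unfold W
  rfl






/-- The canonical special set: the top `r` elements of `Fin m`. -/
noncomputable def topS (r m : ℕ) : Finset (Fin m) :=
  Finset.univ.filter (fun x => m - r ≤ (x : ℕ))

noncomputable def g (r m : ℕ) : ℤ := W m (topS r m) ∅

lemma topS_card (r m : ℕ) (h : r ≤ m) : (topS r m).card = r := by
  classical
  have key : (topS r m).card = (Finset.univ : Finset (Fin r)).card := by
    apply Finset.card_bij'
      (i := fun (y : Fin m) (hy : y ∈ topS r m) =>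
        (⟨(y : ℕ) - (m - r), by
          have h1 := y.isLt
          have h2 : m - r ≤ (y : ℕ) := by simpa [topS] using hy
          omega⟩ : Fin r))
      (j := fun (x : Fin r) (_ : x ∈ Finset.univ) =>
        (⟨m - r + (x : ℕ), by have := x.isLt; omega⟩ : Fin m))
    case hi => intro y hy; exact Finset.mem_univ _
    case hj =>
      intro x hx
      simp only [topS, Finset.mem_filter, Finset.mem_univ, true_and]
      omega
    case left_inv =>
      intro y hy
      have h2 : m - r ≤ (y : ℕ) := by simpa [topS] using hy
      apply Fin.ext
      simp only
      omega
    case right_inv =>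
      intro x hx
      apply Fin.ext
      simp only
      omega
  rw [key, Finset.card_univ, Fintype.card_fin]

lemma topS_succ (r m : ℕ) (h : r ≤ m) :
    ∀ x : Fin m, x.succ ∈ topS r (m+1) ↔ x ∈ topS r m := by
  intro x
  simp only [topS, Finset.mem_filter, Finset.mem_univ, true_and, Fin.val_succ]
  omega

lemma topS_zero_not_mem (r m : ℕ) (h : r ≤ m) : (0 : Fin (m+1)) ∉ topS r (m+1) := by
  simp only [topS, Finset.mem_filter, Finset.mem_univ, true_and, Fin.val_zero]
  omega

lemma succ_image_mem {m : ℕ} (t : Finset (Fin m)) (x : Fin m) :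
    x.succ ∈ t.image Fin.succ ↔ x ∈ t := by
  simp only [Finset.mem_image]
  constructor
  · rintro ⟨z, hz, hzx⟩; rwa [Fin.succ_injective _ hzx] at hz
  · intro hx; exact ⟨x, hx, rfl⟩

lemma zero_not_mem_succ_image {m : ℕ} (t : Finset (Fin m)) :
    (0 : Fin (m+1)) ∉ t.image Fin.succ := by
  simp only [Finset.mem_image]
  rintro ⟨z, -, hz⟩
  exact Fin.succ_ne_zero z hz

lemma g_rec (r m : ℕ) (hrm : r ≤ m) :
    g r (m+1) = -((m : ℤ) * g r m + ((m - r : ℕ) : ℤ) * g r (m-1) + (r : ℤ) * g (r-1) (m-1)) := by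
  classical
  rcases m with _ | k
  · interval_cases r
    rw [g, W_rec_gen 0 (topS 0 1) (topS 0 0) (topS_succ 0 0 le_rfl) (topS_zero_not_mem 0 0 le_rfl)]
    simp
  · rw [g, W_rec_gen (k+1) (topS r (k+2)) (topS r (k+1)) (topS_succ r (k+1) hrm)
      (topS_zero_not_mem r (k+1) hrm)]
    rw [Finset.sum_add_distrib, Finset.sum_const, Finset.card_univ, Fintype.card_fin]
    have hA : ∀ a : Fin (k+1), a ∉ topS r (k+1) → W (k+1) (topS r (k+1)) {a} = g r k := by
      intro a ha
      have hrk : r ≤ k := by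
        by_contra hc
        apply ha
        simp only [topS, Finset.mem_filter, Finset.mem_univ, true_and]
        omega
      have hcard : (topS r (k+1)).card = ((topS r k).image Fin.succ).card := by
        rw [topS_card r (k+1) hrm, Finset.card_image_of_injective _ (Fin.succ_injective _),
          topS_card r k hrk]
      obtain ⟨ρ, hρ1, hρ2⟩ := exists_perm_image_point (topS r (k+1)) ((topS r k).image Fin.succ)
        hcard a 0 (iff_of_false ha (zero_not_mem_succ_image _))
      rw [← W_conj (k+1) (topS r (k+1)) {a} ρ, hρ1, Finset.image_singleton, hρ2,
        W_fix_zero_gen k _ (topS r k) (succ_image_mem _)]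
      rfl
    have hB : ∀ a : Fin (k+1), a ∈ topS r (k+1) → W (k+1) (topS r (k+1)) {a} = g (r-1) k := by
      intro a ha
      have hr1 : 1 ≤ r := by
        by_contra hc
        have hr0 : r = 0 := by omega
        subst hr0
        simp only [topS, Finset.mem_filter, Finset.mem_univ, true_and] at ha
        omega
      have hcard : (topS r (k+1)).card = (insert 0 ((topS (r-1) k).image Fin.succ)).card := by
        rw [topS_card r (k+1) hrm,
          Finset.card_insert_of_notMem (zero_not_mem_succ_image _),
          Finset.card_image_of_injective _ (Fin.succ_injective _),
          topS_card (r-1) k (by omega)]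
        omega
      obtain ⟨ρ, hρ1, hρ2⟩ := exists_perm_image_point (topS r (k+1))
        (insert 0 ((topS (r-1) k).image Fin.succ)) hcard a 0
        (iff_of_true ha (Finset.mem_insert_self _ _))
      rw [← W_conj (k+1) (topS r (k+1)) {a} ρ, hρ1, Finset.image_singleton, hρ2,
        W_fix_zero_gen k _ (topS (r-1) k)
          (fun x => by
            rw [Finset.mem_insert]
            constructor
            · rintro (h | h)
              · exact absurd h (Fin.succ_ne_zero x)
              · exact (succ_image_mem _ x).mp h
            · intro h; exact Or.inr ((succ_image_mem _ x).mpr h))]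
      rfl
    have hsplit : ∑ a : Fin (k+1), W (k+1) (topS r (k+1)) {a} =
        ((k+1-r : ℕ) : ℤ) * g r k + (r : ℤ) * g (r-1) k := by
      rw [← Finset.sum_filter_add_sum_filter_not Finset.univ (fun a => a ∈ topS r (k+1))]
      rw [Finset.sum_congr rfl
          (fun a hamem => hB a (by simpa using (Finset.mem_filter.mp hamem).2)),
        Finset.sum_congr rfl
          (fun a hamem => hA a (by simpa using (Finset.mem_filter.mp hamem).2))]
      rw [Finset.sum_const, Finset.sum_const]
      have hc1 : (Finset.univ.filter (fun a => a ∈ topS r (k+1))).card = r := by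
        rw [show Finset.univ.filter (fun a => a ∈ topS r (k+1)) = topS r (k+1) from by
          ext z; simp]
        exact topS_card r (k+1) hrm
      have htot := Finset.card_filter_add_card_filter_not
        (s := (Finset.univ : Finset (Fin (k+1)))) (p := fun a => a ∈ topS r (k+1))
      rw [hc1, Finset.card_univ, Fintype.card_fin] at htot
      have hc2 : (Finset.univ.filter (fun a => ¬ a ∈ topS r (k+1))).card = k + 1 - r := by
        omega
      rw [hc1, hc2]
      push_cast
      ring
    rw [hsplit]
    have hgfold : W (k+1) (topS r (k+1)) ∅ = g r (k+1) := rfl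
    rw [hgfold, nsmul_eq_mul]
    simp only [Nat.add_sub_cancel]
    push_cast
    ring

noncomputable def Phi (s n : ℕ) : ℤ :=
  ∑ j ∈ Finset.Icc (s+2) n, (Nat.descFactorial n j : ℤ) * ((j-2).choose s : ℤ)

lemma sum_shift (a n : ℕ) (f : ℕ → ℤ) :
    ∑ j ∈ Finset.Icc (a+1) (n+1), f j = ∑ i ∈ Finset.Icc a n, f (i+1) := by
  rw [← Finset.map_add_right_Icc a n 1, Finset.sum_map]
  rfl

lemma sum_Icc_bot (a n : ℕ) (f : ℕ → ℤ) (h : a ≤ n) :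
    ∑ j ∈ Finset.Icc a n, f j = f a + ∑ j ∈ Finset.Icc (a+1) n, f j := by
  rw [show Finset.Icc a n = insert a (Finset.Icc (a+1) n) from by
    ext z; simp only [Finset.mem_Icc, Finset.mem_insert]; omega]
  rw [Finset.sum_insert (by simp [Finset.mem_Icc])]

lemma sum_Icc_bot_zero (a n : ℕ) (f : ℕ → ℤ) (hfa : f a = 0) :
    ∑ j ∈ Finset.Icc a n, f j = ∑ j ∈ Finset.Icc (a+1) n, f j := by
  rcases le_or_gt a n with h | h
  · rw [sum_Icc_bot a n f h, hfa, zero_add]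
  · rw [Finset.Icc_eq_empty (by omega), Finset.Icc_eq_empty (by omega)]

lemma sum_Icc_top_zero (a n : ℕ) (f : ℕ → ℤ) (hfn : f (n+1) = 0) :
    ∑ j ∈ Finset.Icc a (n+1), f j = ∑ j ∈ Finset.Icc a n, f j := by
  rcases le_or_gt a (n+1) with h | h
  · rw [Finset.sum_Icc_succ_top h, hfn, add_zero]
  · rw [Finset.Icc_eq_empty (by omega), Finset.Icc_eq_empty (by omega)]

lemma df_succ_cast (n j : ℕ) : ((n+1).descFactorial (j+1) : ℤ) =
    (n+1 : ℤ) * (n.descFactorial j : ℤ) := by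
  rw [Nat.succ_descFactorial_succ]; push_cast; ring

-- P1a
lemma Phi_succ (s n : ℕ) : Phi (s+1) (n+1) = (n+1 : ℤ) * (Phi (s+1) n + Phi s n) := by
  unfold Phi
  rw [show s+1+2 = (s+2)+1 from rfl, sum_shift (s+2) n]
  have step : ∀ i ∈ Finset.Icc (s+2) n,
      ((n+1).descFactorial (i+1) : ℤ) * ((i+1-2).choose (s+1) : ℤ) =
      (n+1 : ℤ) * ((n.descFactorial i : ℤ) * ((i-2).choose (s+1) : ℤ)
        + (n.descFactorial i : ℤ) * ((i-2).choose s : ℤ)) := by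
    intro i hi
    rw [Finset.mem_Icc] at hi
    rw [df_succ_cast]
    have h1 : i+1-2 = (i-2)+1 := by omega
    have h2 : (i-2+1).choose (s+1) = (i-2).choose s + (i-2).choose (s+1) :=
      Nat.choose_succ_succ _ _
    rw [h1, h2]
    push_cast
    ring
  rw [Finset.sum_congr rfl step, ← Finset.mul_sum, Finset.sum_add_distrib]
  congr 1
  congr 1
  · rw [sum_Icc_bot_zero (s+2) n _ (by
      simp only [Nat.add_sub_cancel]
      rw [Nat.choose_eq_zero_of_lt (by omega)]
      ring)]

-- P1b
lemma Phi_zero_succ (n : ℕ) : Phi 0 (n+1) = (n+1 : ℤ) * (Phi 0 n + n) := by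
  unfold Phi
  rw [show 0+2 = 1+1 from rfl, sum_shift 1 n]
  have step : ∀ i ∈ Finset.Icc 1 n,
      ((n+1).descFactorial (i+1) : ℤ) * ((i+1-2).choose 0 : ℤ) =
      (n+1 : ℤ) * (n.descFactorial i : ℤ) := by
    intro i hi
    rw [df_succ_cast, Nat.choose_zero_right]
    push_cast; ring
  rw [Finset.sum_congr rfl step, ← Finset.mul_sum]
  congr 1
  rcases Nat.eq_zero_or_pos n with rfl | hn
  · rw [Finset.Icc_eq_empty (by omega), Finset.Icc_eq_empty (by omega)]
    simp
  · rw [sum_Icc_bot 1 n _ hn, Nat.descFactorial_one, add_comm]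
    congr 1
    apply Finset.sum_congr (by norm_num)
    intro j hj
    rw [Nat.choose_zero_right]
    push_cast; ring

lemma df_top_zero (n : ℕ) : (n.descFactorial (n+1) : ℤ) = 0 := by
  rw [Nat.descFactorial_eq_zero_iff_lt.mpr (by omega)]
  rfl

lemma star (s n : ℕ) (hn : 1 ≤ n) :
    ((n:ℤ) + 1 - ((s:ℤ)+3)) * Phi s n
      = ((s:ℤ)+2) * Phi (s+1) n - (n:ℤ) * Phi (s+1) (n-1) := by
  -- (a) n * Phi (s+1) (n-1) = ∑_{j ∈ Icc (s+3) n} df(n,j) C(j-3, s+1)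
  obtain ⟨t, rfl⟩ : ∃ t, n = t + 1 := ⟨n - 1, by omega⟩
  have ka : ((t:ℤ)+1) * Phi (s+1) t
      = ∑ j ∈ Finset.Icc (s+3) (t+1), ((t+1).descFactorial j : ℤ) * ((j-3).choose (s+1) : ℤ) := by
    rw [sum_Icc_bot_zero (s+3) (t+1) _ (by
        rw [show s+3-3 = s from by omega, Nat.choose_eq_zero_of_lt (by omega)]
        ring),
      show s+3+1 = (s+3)+1 from rfl, sum_shift (s+3) t]
    unfold Phi
    rw [Finset.mul_sum]
    apply Finset.sum_congr rfl
    intro j hj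
    rw [Finset.mem_Icc] at hj
    rw [df_succ_cast, show j+1-3 = j-2 from by omega]
    push_cast; ring
  -- (b)
  have kb : ∑ j ∈ Finset.Icc (s+2) (t+1),
        ((t+1).descFactorial j : ℤ) * (((t:ℤ)+1) - (j:ℤ)) * ((j-2).choose s : ℤ)
      = ∑ j ∈ Finset.Icc (s+3) (t+1), ((t+1).descFactorial j : ℤ) * ((j-3).choose s : ℤ) := by
    rw [show s+3 = (s+2)+1 from rfl, ← sum_Icc_top_zero ((s+2)+1) (t+1) _ (by
        rw [df_top_zero]; ring),
      sum_shift (s+2) (t+1)]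
    apply Finset.sum_congr rfl
    intro j hj
    rw [Finset.mem_Icc] at hj
    have hds : ((t+1).descFactorial (j+1) : ℤ)
        = (((t:ℤ)+1) - (j:ℤ)) * ((t+1).descFactorial j : ℤ) := by
      rw [Nat.descFactorial_succ]
      have : ((t+1-j : ℕ) : ℤ) = ((t:ℤ)+1) - (j:ℤ) := by omega
      push_cast [← this]
      ring
    rw [show j+1-3 = j-2 from by omega, hds]
    ring
  -- (c)
  have kc : ∑ j ∈ Finset.Icc (s+2) (t+1),
        ((t+1).descFactorial j : ℤ) * ((j:ℤ) + 1 - ((s:ℤ)+3)) * ((j-2).choose s : ℤ)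
      = ((s:ℤ)+1) * Phi (s+1) (t+1) := by
    unfold Phi
    rw [show s+1+2 = (s+2)+1 from by omega,
      ← sum_Icc_bot_zero (s+2) (t+1) _ (by
        rw [show s+2-2 = s from by omega, Nat.choose_eq_zero_of_lt (by omega)]
        ring),
      Finset.mul_sum]
    apply Finset.sum_congr rfl
    intro j hj
    rw [Finset.mem_Icc] at hj
    have hcs := Nat.choose_succ_right_eq (j-2) s
    have hcast : ((j-2-s : ℕ) : ℤ) = (j:ℤ) + 1 - ((s:ℤ)+3) := by omega
    have : ((j-2).choose s : ℤ) * ((j:ℤ) + 1 - ((s:ℤ)+3))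
        = ((s:ℤ)+1) * ((j-2).choose (s+1) : ℤ) := by
      rw [← hcast]
      have := congrArg (Nat.cast : ℕ → ℤ) hcs.symm
      push_cast at this
      linarith [this]
    calc ((t+1).descFactorial j : ℤ) * ((j:ℤ) + 1 - ((s:ℤ)+3)) * ((j-2).choose s : ℤ)
        = ((t+1).descFactorial j : ℤ) * (((j-2).choose s : ℤ) * ((j:ℤ) + 1 - ((s:ℤ)+3))) := by
          ring
      _ = ((t+1).descFactorial j : ℤ) * (((s:ℤ)+1) * ((j-2).choose (s+1) : ℤ)) := by rw [this]
      _ = ((s:ℤ)+1) * (((t+1).descFactorial j : ℤ) * ((j-2).choose (s+1) : ℤ)) := by ring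
  -- (d) Pascal
  have kd : ∑ j ∈ Finset.Icc (s+3) (t+1), ((t+1).descFactorial j : ℤ) * ((j-3).choose s : ℤ)
      + ∑ j ∈ Finset.Icc (s+3) (t+1), ((t+1).descFactorial j : ℤ) * ((j-3).choose (s+1) : ℤ)
      = Phi (s+1) (t+1) := by
    unfold Phi
    rw [← Finset.sum_add_distrib]
    apply Finset.sum_congr (by norm_num)
    intro j hj
    rw [Finset.mem_Icc] at hj
    rw [show j-2 = (j-3)+1 from by omega, Nat.choose_succ_succ]
    push_cast
    ring
  -- combine
  have hdecomp : ((t:ℤ)+1+1-((s:ℤ)+3)) * Phi s (t+1)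
      = ∑ j ∈ Finset.Icc (s+2) (t+1),
          ((t+1).descFactorial j : ℤ) * (((t:ℤ)+1) - (j:ℤ)) * ((j-2).choose s : ℤ)
        + ∑ j ∈ Finset.Icc (s+2) (t+1),
          ((t+1).descFactorial j : ℤ) * ((j:ℤ) + 1 - ((s:ℤ)+3)) * ((j-2).choose s : ℤ) := by
    unfold Phi
    rw [← Finset.sum_add_distrib, Finset.mul_sum]
    apply Finset.sum_congr rfl
    intro j hj
    ring
  push_cast at hdecomp ⊢
  rw [hdecomp, kb, kc]
  push_cast at ka kd ⊢
  linarith [ka, kd]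

noncomputable def T : ℕ → ℕ → ℤ
  | 0, n => if n = 0 then 1 else (-1)^(n-1) * ((n-1 : ℕ) : ℤ)
  | 1, n => (-1)^n * (n : ℤ)
  | (s+2), n => (-1)^n * Phi s n

lemma Phi_small (s n : ℕ) (h : n < s + 2) : Phi s n = 0 := by
  unfold Phi
  rw [Finset.Icc_eq_empty (by omega), Finset.sum_empty]

lemma Trec (r n : ℕ) :
    T r (n+1) = -(((r:ℤ) + (n:ℤ)) * T r n + (n:ℤ) * T r (n-1) + (r:ℤ) * T (r-1) n) := by
  match r with
  | 0 =>
    match n with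
    | 0 => simp [T]
    | 1 => norm_num [T]
    | (j+2) =>
      simp only [T, if_neg (by omega : ¬ j+2+1 = 0), if_neg (by omega : ¬ j+2 = 0),
        if_neg (by omega : ¬ j+2-1 = 0)]
      rw [show j+2+1-1 = j+2 from by omega, show j+2-1 = j+1 from by omega,
        show j+1-1 = j from by omega]
      push_cast
      rw [show j+2 = j+1+1 from by omega]
      rw [pow_succ, pow_succ]
      push_cast
      ring
  | 1 =>
    match n with
    | 0 => norm_num [T]
    | (k+1) =>
      simp only [T, if_neg (by omega : ¬ k+1 = 0)]
      rw [show k+1-1 = k from by omega]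
      rw [pow_succ, pow_succ]
      push_cast
      ring
  | 2 =>
    match n with
    | 0 =>
      simp only [T]
      rw [Phi_small 0 1 (by omega), Phi_small 0 0 (by omega)]
      norm_num
    | (k+1) =>
      simp only [T]
      have h1 := Phi_zero_succ (k+1)
      have h2 := Phi_zero_succ k
      rw [show k+1-1 = k from by omega]
      push_cast at h1 h2 ⊢
      rw [pow_succ, pow_succ]
      linear_combination ((-1:ℤ)^k) * h1 - ((-1:ℤ)^k) * h2
  | (s+3) =>
    match n with
    | 0 =>
      simp only [show s+3-1 = s+2 from rfl, T]
      rw [Phi_small (s+1) 1 (by omega), Phi_small (s+1) 0 (by omega),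
        Phi_small s 0 (by omega)]
      norm_num
    | (k+1) =>
      simp only [show s+3-1 = s+2 from rfl, T]
      have h1 := Phi_succ s (k+1)
      have h2 := star s (k+1) (by omega)
      rw [show k+1-1 = k from by omega] at *
      push_cast at h1 h2 ⊢
      rw [pow_succ, pow_succ]
      linear_combination ((-1:ℤ)^k) * h1 + ((-1:ℤ)^k) * h2

lemma g_zero_zero : g 0 0 = 1 := by
  unfold g W
  have huniq : ∀ σ : Equiv.Perm (Fin 0), σ = 1 := fun σ => Equiv.ext (fun x => x.elim0)
  have huniv : (Finset.univ : Finset (Equiv.Perm (Fin 0))) = {1} := by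
    apply (Finset.eq_singleton_iff_unique_mem).mpr
    exact ⟨Finset.mem_univ 1, fun σ _ => huniq σ⟩
  rw [huniv, Finset.filter_singleton, if_pos ⟨fun x => x.elim0, fun x => x.elim0⟩,
    Finset.sum_singleton]
  simp

lemma g_diag (r : ℕ) (hr : 1 ≤ r) : g r r = 0 := by
  unfold g W
  rw [Finset.filter_false_of_mem, Finset.sum_empty]
  rintro σ - ⟨h1, h2⟩
  set z : Fin r := ⟨0, hr⟩ with hz
  have hzfix : σ z ≠ z := by
    intro h
    simpa using (h1 z).mp h
  have hmem : ∀ w : Fin r, w ∈ topS r r := by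
    intro w
    simp only [topS, Finset.mem_filter, Finset.mem_univ, true_and]
    omega
  exact h2 z (hmem z) (σ z) (hmem (σ z)) (fun h => hzfix h.symm) ⟨1, by simp⟩

lemma g_eq_T : ∀ n r : ℕ, g r (r + n) = T r n := by
  intro n
  induction n using Nat.strong_induction_on with
  | _ n ih =>
    intro r
    match n with
    | 0 =>
      match r with
      | 0 => simpa [T] using g_zero_zero
      | 1 => rw [g_diag 1 (by omega)]; simp [T]
      | (s+2) =>
        rw [g_diag (s+2) (by omega)]
        simp [T, Phi_small s 0 (by omega)]
    | (k+1) =>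
      have hrec := g_rec r (r+k) (by omega)
      rw [show r+(k+1) = (r+k)+1 from rfl, hrec, show r+k-r = k from by omega,
        ih k (by omega) r]
      have e3 : (k:ℤ) * g r (r+k-1) = (k:ℤ) * T r (k-1) := by
        match k with
        | 0 => simp
        | (j+1) =>
          rw [show r+(j+1)-1 = r+j from by omega, show j+1-1 = j from rfl,
            ih j (by omega) r]
      have e4 : (r:ℤ) * g (r-1) (r+k-1) = (r:ℤ) * T (r-1) k := by
        match r with
        | 0 => simp
        | (u+1) =>
          rw [show u+1+k-1 = u+k from by omega, show u+1-1 = u from rfl,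
            ih k (by omega) u]
      rw [e3, e4, Trec r k]
      push_cast
      ring

lemma botS_card (r m : ℕ) (h : r ≤ m) :
    ((Finset.univ : Finset (Fin m)).filter (fun x : Fin m => (x : ℕ) < r)).card = r := by
  classical
  have key : ((Finset.univ : Finset (Fin m)).filter (fun x : Fin m => (x : ℕ) < r)).card
      = (Finset.univ : Finset (Fin r)).card := by
    apply Finset.card_bij'
      (i := fun (y : Fin m) (hy : y ∈ (Finset.univ : Finset (Fin m)).filter
          (fun x : Fin m => (x : ℕ) < r)) =>
        (⟨(y : ℕ), by simpa using hy⟩ : Fin r))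
      (j := fun (x : Fin r) (_ : x ∈ Finset.univ) =>
        (⟨(x : ℕ), by have := x.isLt; omega⟩ : Fin m))
    case hi => intro y hy; exact Finset.mem_univ _
    case hj =>
      intro x hx
      simp only [Finset.mem_filter, Finset.mem_univ, true_and]
      exact x.isLt
    case left_inv => intro y hy; apply Fin.ext; simp
    case right_inv => intro x hx; apply Fin.ext; simp
  rw [key, Finset.card_univ, Fintype.card_fin]

lemma sum_sign_rDer (r n : ℕ) :
    ∑ σ ∈ rDerSet r n, (Equiv.Perm.sign σ : ℤ) = g r (r+n) := by
  classical
  have hW : ∑ σ ∈ rDerSet r n, (Equiv.Perm.sign σ : ℤ)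
      = W (r+n) ((Finset.univ : Finset (Fin (r+n))).filter (fun x : Fin (r+n) => (x : ℕ) < r)) ∅ := by
    unfold W rDerSet
    congr 1
    apply Finset.filter_congr
    intro σ _
    constructor
    · rintro ⟨hfpf, hdisj⟩
      refine ⟨fun x => ⟨fun h => absurd h (hfpf x), fun h => absurd h (Finset.notMem_empty x)⟩, ?_⟩
      intro x hx y hy hxy
      simp only [Finset.mem_filter, Finset.mem_univ, true_and] at hx hy
      exact hdisj x y hx hy hxy
    · rintro ⟨h1, h2⟩
      refine ⟨fun x h => absurd ((h1 x).mp h) (Finset.notMem_empty x), ?_⟩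
      intro x y hx hy hxy
      exact h2 x (by simp [hx]) y (by simp [hy]) hxy
  rw [hW]
  obtain ⟨ρ, hρ⟩ := exists_perm_image r
    ((Finset.univ : Finset (Fin (r+n))).filter (fun x : Fin (r+n) => (x : ℕ) < r))
    (topS r (r+n)) (botS_card r (r+n) (by omega)) (topS_card r (r+n) (by omega))
  have := W_conj (r+n)
    ((Finset.univ : Finset (Fin (r+n))).filter (fun x : Fin (r+n) => (x : ℕ) < r)) ∅ ρ
  rw [hρ, Finset.image_empty] at this
  rw [← this]
  rfl

lemma parity_zero_iff {α : Type*} [Fintype α] [DecidableEq α] (σ : Equiv.Perm α) :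
    parity σ = 0 ↔ Equiv.Perm.sign σ = 1 := by
  unfold parity
  by_cases h : Equiv.Perm.sign σ = 1 <;> simp [h]

lemma Cr_eq_neg_sum (r n : ℕ) :
    Cr r n = -∑ σ ∈ rDerSet r n, (Equiv.Perm.sign σ : ℤ) := by
  classical
  unfold Cr Dri
  rw [← Finset.sum_filter_add_sum_filter_not (rDerSet r n) (fun σ => parity σ = 0)
    (fun σ => (Equiv.Perm.sign σ : ℤ))]
  have hA : ∑ σ ∈ (rDerSet r n).filter (fun σ => parity σ = 0), (Equiv.Perm.sign σ : ℤ)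
      = (((rDerSet r n).filter (fun σ => parity σ = 0)).card : ℤ) := by
    rw [Finset.sum_congr rfl (fun σ hσ => ?_), Finset.sum_const, nsmul_eq_mul, mul_one]
    have hp := (Finset.mem_filter.mp hσ).2
    rw [parity_zero_iff] at hp
    rw [hp]
    rfl
  have hB : ∑ σ ∈ (rDerSet r n).filter (fun σ => ¬ parity σ = 0), (Equiv.Perm.sign σ : ℤ)
      = -((((rDerSet r n).filter (fun σ => ¬ parity σ = 0)).card : ℤ)) := by
    rw [Finset.sum_congr rfl (fun σ hσ => ?_), Finset.sum_const, nsmul_eq_mul, mul_neg_one]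
    have hp := (Finset.mem_filter.mp hσ).2
    rw [parity_zero_iff] at hp
    rcases Int.units_eq_one_or (Equiv.Perm.sign σ) with h | h
    · exact absurd h hp
    · rw [h]; rfl
  have hfilt : (rDerSet r n).filter (fun σ => ¬ parity σ = 0)
      = (rDerSet r n).filter (fun σ => parity σ = 1) := by
    apply Finset.filter_congr
    intro σ _
    unfold parity
    by_cases h : Equiv.Perm.sign σ = 1 <;> simp [h]
  rw [hA, hB, hfilt]
  push_cast
  ring

theorem Cr_explicit (r n : ℕ) (hr : 2 ≤ r) (hn : r ≤ n) :
    Cr r n = (-1) ^ (n - 1) *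
      ∑ j ∈ Finset.Icc r n,
        (Nat.descFactorial n j : ℤ) * (Nat.choose (j - 2) (r - 2) : ℤ) := by
  obtain ⟨s, rfl⟩ : ∃ s, r = s + 2 := ⟨r - 2, by omega⟩
  obtain ⟨t, rfl⟩ : ∃ t, n = t + 1 := ⟨n - 1, by omega⟩
  rw [Cr_eq_neg_sum, sum_sign_rDer, g_eq_T]
  simp only [T]
  rw [show s + 2 - 2 = s from by omega, show t + 1 - 1 = t from rfl, pow_succ]
  unfold Phi
  ring
end

section
/- For every natural number r ≥ 2 and every n ≥ r, the quantity (−1)^n · (D_r^{(0)}(n) − D_r^{(1)}(n)) is strictly positive; that is, the number of even r-derangements exceeds the number of odd ones exactly when n is even. -/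
open scoped Classical

namespace RDer
set_option linter.unusedSectionVars false

variable {α β : Type*} [Fintype α] [DecidableEq α] [Fintype β] [DecidableEq β]

def Good (R : Finset α) (σ : Equiv.Perm α) : Prop :=
  (∀ x, σ x ≠ x) ∧ ∀ x ∈ R, ∀ y ∈ R, x ≠ y → ¬ σ.SameCycle x y

noncomputable def Fsum (R : Finset α) : ℤ :=
  ∑ σ ∈ Finset.univ.filter (fun σ => Good R σ), (Equiv.Perm.sign σ : ℤ)

lemma sameCycle_iff_pow {σ : Equiv.Perm α} {x y : α} :
    σ.SameCycle x y ↔ ∃ i : ℕ, (σ ^ i) x = y := by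
  constructor
  · intro h
    obtain ⟨i, _, h⟩ := h.exists_pow_eq'
    exact ⟨i, h⟩
  · rintro ⟨i, h⟩
    exact ⟨(i : ℤ), by exact_mod_cast h⟩

lemma permCongr_pow (e : α ≃ β) (σ : Equiv.Perm α) (i : ℕ) :
    (e.permCongr σ) ^ i = e.permCongr (σ ^ i) := by
  induction i with
  | zero => ext x; simp
  | succ n ih =>
      ext x
      simp only [pow_succ, Equiv.Perm.mul_apply, ih, Equiv.permCongr_apply]
      simp

lemma sameCycle_permCongr (e : α ≃ β) (σ : Equiv.Perm α) (x y : α) :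
    (e.permCongr σ).SameCycle (e x) (e y) ↔ σ.SameCycle x y := by
  rw [sameCycle_iff_pow, sameCycle_iff_pow]
  constructor
  · rintro ⟨i, h⟩
    refine ⟨i, ?_⟩
    rw [permCongr_pow] at h
    simp only [Equiv.permCongr_apply, Equiv.symm_apply_apply] at h
    exact e.injective h
  · rintro ⟨i, h⟩
    exact ⟨i, by rw [permCongr_pow]; simp [h]⟩

lemma good_permCongr (e : α ≃ β) (R : Finset α) (R' : Finset β)
    (hR : ∀ x, x ∈ R ↔ e x ∈ R') (σ : Equiv.Perm α) :
    Good R' (e.permCongr σ) ↔ Good R σ := by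
  constructor
  · rintro ⟨h1, h2⟩
    refine ⟨fun x hx => h1 (e x) (by simp [hx]), ?_⟩
    intro x hx y hy hxy hc
    exact h2 (e x) ((hR x).1 hx) (e y) ((hR y).1 hy) (fun h => hxy (e.injective h))
      ((sameCycle_permCongr e σ x y).2 hc)
  · rintro ⟨h1, h2⟩
    constructor
    · intro y hy
      simp only [Equiv.permCongr_apply] at hy
      exact h1 (e.symm y) (by conv_rhs => rw [← hy]; simp)
    · intro x hx y hy hxy hc
      have hx' : e.symm x ∈ R := (hR _).2 (by simpa using hx)
      have hy' : e.symm y ∈ R := (hR _).2 (by simpa using hy)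
      refine h2 _ hx' _ hy' (fun h => hxy (by simpa using congrArg e h)) ?_
      have := (sameCycle_permCongr e σ (e.symm x) (e.symm y))
      simp only [Equiv.apply_symm_apply] at this
      exact this.1 hc

lemma Fsum_equiv (e : α ≃ β) (R : Finset α) (R' : Finset β)
    (hR : ∀ x, x ∈ R ↔ e x ∈ R') : Fsum R' = Fsum R := by
  unfold Fsum
  rw [Finset.sum_filter, Finset.sum_filter]
  rw [← Equiv.sum_comp (e.permCongr)
    (fun σ => if Good R' σ then (Equiv.Perm.sign σ : ℤ) else 0)]
  apply Finset.sum_congr rfl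
  intro σ _
  rw [good_permCongr e R R' hR σ, Equiv.Perm.sign_permCongr]


noncomputable def sp (b : α) (δ : Equiv.Perm α) : Equiv.Perm (Option α) :=
  Equiv.Perm.decomposeOption.symm (some b, δ)

lemma sp_def (b : α) (δ : Equiv.Perm α) :
    sp b δ = Equiv.swap none (some b) * δ.optionCongr := rfl

lemma sp_none (b : α) (δ : Equiv.Perm α) : sp b δ none = some b := by
  simp [sp_def]

lemma sp_some (b : α) (δ : Equiv.Perm α) (x : α) :
    sp b δ (some x) = if δ x = b then none else some (δ x) := by
  by_cases h : δ x = b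
  · simp [sp_def, h]
  · simp only [sp_def, Equiv.Perm.mul_apply, Equiv.optionCongr_apply, Option.map_some]
    rw [Equiv.swap_apply_of_ne_of_ne (by simp) (by simpa using h)]
    simp [h]

lemma sp_sign (b : α) (δ : Equiv.Perm α) :
    Equiv.Perm.sign (sp b δ) = - Equiv.Perm.sign δ := by
  rw [sp_def, Equiv.Perm.sign_mul, Equiv.Perm.sign_swap (by simp), Equiv.optionCongr_sign]
  simp

lemma sp_sameCycle_mpr (b : α) (δ : Equiv.Perm α) (x : α) :
    (sp b δ).SameCycle (some x) (some (δ x)) := by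
  by_cases h : δ x = b
  · refine ⟨2, ?_⟩
    have h1 : sp b δ (some x) = none := by rw [sp_some, if_pos h]
    have : ((sp b δ) ^ (2:ℤ)) (some x) = sp b δ (sp b δ (some x)) := by
      rw [show (2:ℤ) = 1 + 1 by norm_num, zpow_add, zpow_one]; rfl
    rw [this, h1, sp_none, h]
  · exact ⟨1, by rw [zpow_one, sp_some, if_neg h]⟩

lemma sp_sameCycle (b : α) (δ : Equiv.Perm α) (x y : α) :
    (sp b δ).SameCycle (some x) (some y) ↔ δ.SameCycle x y := by
  constructor
  · rw [sameCycle_iff_pow]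
    rintro ⟨i, h⟩
    induction i using Nat.strong_induction_on generalizing x with
    | _ i ih =>
      match i with
      | 0 =>
        simp only [pow_zero, Equiv.Perm.coe_one, id_eq, Option.some.injEq] at h
        exact h ▸ Equiv.Perm.SameCycle.refl _ _
      | 1 =>
        simp only [pow_one] at h
        rw [sp_some] at h
        by_cases hb : δ x = b
        · rw [if_pos hb] at h; exact absurd h (by simp)
        · rw [if_neg hb] at h
          obtain rfl : δ x = y := by simpa using h
          exact ⟨1, by simp⟩
      | (j+2) =>
        by_cases hb : δ x = b
        · have h2 : ((sp b δ) ^ (j+2)) (some x) = ((sp b δ) ^ j) (some b) := by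
            rw [show j + 2 = j + 1 + 1 by ring, pow_succ, pow_succ, Equiv.Perm.mul_apply,
              Equiv.Perm.mul_apply, sp_some, if_pos hb, sp_none]
          rw [h2] at h
          have := ih j (by omega) b h
          exact (Equiv.Perm.SameCycle.trans ⟨1, by simpa using hb⟩ this)
        · have h2 : ((sp b δ) ^ (j+2)) (some x) = ((sp b δ) ^ (j+1)) (some (δ x)) := by
            rw [pow_succ, Equiv.Perm.mul_apply, sp_some, if_neg hb]
          rw [h2] at h
          have := ih (j+1) (by omega) (δ x) h
          exact Equiv.Perm.SameCycle.trans ⟨1, by simp⟩ this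
  · rw [sameCycle_iff_pow (σ := δ)]
    rintro ⟨i, h⟩
    induction i generalizing y with
    | zero => simp only [pow_zero, Equiv.Perm.coe_one, id_eq] at h; exact h ▸ .refl _ _
    | succ n ih =>
      rw [pow_succ', Equiv.Perm.mul_apply] at h
      exact (ih _ rfl).trans (h ▸ sp_sameCycle_mpr b δ _)


lemma good_sp (R : Finset α) (b : α) (δ : Equiv.Perm α) :
    Good (R.image some) (sp b δ) ↔
      ((∀ x, δ x = x → x = b) ∧ ∀ x ∈ R, ∀ y ∈ R, x ≠ y → ¬ δ.SameCycle x y) := by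
  constructor
  · rintro ⟨h1, h2⟩
    constructor
    · intro x hx
      by_contra hxb
      have hne : δ x ≠ b := by rw [hx]; exact hxb
      have := h1 (some x)
      rw [sp_some, if_neg hne, hx] at this
      exact this rfl
    · intro x hx y hy hxy hc
      exact h2 (some x) (Finset.mem_image_of_mem _ hx) (some y) (Finset.mem_image_of_mem _ hy)
        (by simpa using hxy) ((sp_sameCycle b δ x y).2 hc)
  · rintro ⟨h1, h2⟩
    constructor
    · intro u
      match u with
      | none => rw [sp_none]; simp
      | some x =>
        rw [sp_some]
        by_cases hb : δ x = b
        · rw [if_pos hb]; simp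
        · rw [if_neg hb]
          simp only [ne_eq, Option.some.injEq]
          intro hfix
          exact hb (hfix.trans (h1 x hfix))
    · intro u hu v hv huv hc
      obtain ⟨x, hx, rfl⟩ := Finset.mem_image.1 hu
      obtain ⟨y, hy, rfl⟩ := Finset.mem_image.1 hv
      exact h2 x hx y hy (by simpa using huv) ((sp_sameCycle b δ x y).1 hc)

/-- the sum over "2-cycle with `b`" permutations -/
noncomputable def Bsum (R : Finset α) (b : α) : ℤ :=
  ∑ δ ∈ Finset.univ.filter (fun δ : Equiv.Perm α =>
      δ b = b ∧ (∀ x, x ≠ b → δ x ≠ x) ∧ ∀ x ∈ R, ∀ y ∈ R, x ≠ y → ¬ δ.SameCycle x y),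
    (Equiv.Perm.sign δ : ℤ)

lemma Fsum_option (R : Finset α) :
    Fsum (R.image (some : α → Option α)) =
      -(Fintype.card α : ℤ) * Fsum R - ∑ b : α, Bsum R b := by
  classical
  have key : Fsum (R.image (some : α → Option α)) =
      ∑ p : Option α × Equiv.Perm α,
        (if Good (R.image some) (Equiv.Perm.decomposeOption.symm p) then
          (Equiv.Perm.sign (Equiv.Perm.decomposeOption.symm p) : ℤ) else 0) := by
    rw [Fsum, Finset.sum_filter]
    exact (Equiv.sum_comp Equiv.Perm.decomposeOption.symm
      (fun σ => if Good (R.image some) σ then (Equiv.Perm.sign σ : ℤ) else 0)).symm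
  rw [key, Fintype.sum_prod_type, Fintype.sum_option]
  have hnone : ∀ δ : Equiv.Perm α,
      (if Good (R.image some) (Equiv.Perm.decomposeOption.symm (none, δ)) then
        (Equiv.Perm.sign (Equiv.Perm.decomposeOption.symm (none, δ)) : ℤ) else 0) = 0 := by
    intro δ
    rw [if_neg]
    rintro ⟨h1, -⟩
    exact h1 none (by simp)
  rw [Finset.sum_congr rfl (fun δ _ => hnone δ), Finset.sum_const_zero, zero_add]
  have hb : ∀ b : α,
      (∑ δ : Equiv.Perm α,
        if Good (R.image some) (Equiv.Perm.decomposeOption.symm (some b, δ)) then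
          (Equiv.Perm.sign (Equiv.Perm.decomposeOption.symm (some b, δ)) : ℤ) else 0)
        = -(Fsum R) - Bsum R b := by
    intro b
    have step1 : ∀ δ : Equiv.Perm α,
        (if Good (R.image some) (Equiv.Perm.decomposeOption.symm (some b, δ)) then
          (Equiv.Perm.sign (Equiv.Perm.decomposeOption.symm (some b, δ)) : ℤ) else 0)
        = (if ((∀ x, δ x = x → x = b) ∧ ∀ x ∈ R, ∀ y ∈ R, x ≠ y → ¬ δ.SameCycle x y) then
            -(Equiv.Perm.sign δ : ℤ) else 0) := by
      intro δ
      show (if Good (R.image some) (sp b δ) then ((Equiv.Perm.sign (sp b δ) : ℤˣ) : ℤ) else 0) = _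
      have hg := good_sp R b δ
      by_cases h : ((∀ x, δ x = x → x = b) ∧ ∀ x ∈ R, ∀ y ∈ R, x ≠ y → ¬ δ.SameCycle x y)
      · rw [if_pos (hg.2 h), if_pos h, sp_sign]
        push_cast; ring
      · rw [if_neg (fun hh => h (hg.1 hh)), if_neg h]
    rw [Finset.sum_congr rfl (fun δ _ => step1 δ)]
    rw [← Finset.sum_filter]
    rw [← Finset.sum_filter_add_sum_filter_not _ (fun δ : Equiv.Perm α => δ b = b)]
    rw [Finset.filter_filter, Finset.filter_filter]
    have e1 : Finset.univ.filter (fun δ : Equiv.Perm α =>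
        ((∀ x, δ x = x → x = b) ∧ ∀ x ∈ R, ∀ y ∈ R, x ≠ y → ¬ δ.SameCycle x y) ∧ δ b = b)
        = Finset.univ.filter (fun δ : Equiv.Perm α =>
          δ b = b ∧ (∀ x, x ≠ b → δ x ≠ x) ∧ ∀ x ∈ R, ∀ y ∈ R, x ≠ y → ¬ δ.SameCycle x y) := by
      apply Finset.filter_congr
      intro δ _
      constructor
      · rintro ⟨⟨h1, h2⟩, h3⟩
        exact ⟨h3, fun x hx hfix => hx (h1 x hfix), h2⟩
      · rintro ⟨h3, h1, h2⟩
        refine ⟨⟨fun x hfix => ?_, h2⟩, h3⟩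
        by_contra hxb
        exact h1 x hxb hfix
    have e2 : Finset.univ.filter (fun δ : Equiv.Perm α =>
        ((∀ x, δ x = x → x = b) ∧ ∀ x ∈ R, ∀ y ∈ R, x ≠ y → ¬ δ.SameCycle x y) ∧ ¬ δ b = b)
        = Finset.univ.filter (fun δ : Equiv.Perm α => Good R δ) := by
      apply Finset.filter_congr
      intro δ _
      constructor
      · rintro ⟨⟨h1, h2⟩, h3⟩
        refine ⟨fun x hfix => ?_, h2⟩
        have hxb := h1 x hfix
        exact h3 (hxb ▸ hfix)
      · rintro ⟨h1, h2⟩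
        exact ⟨⟨fun x hfix => absurd hfix (h1 x), h2⟩, h1 b⟩
    rw [e1, e2]
    rw [Finset.sum_neg_distrib, Finset.sum_neg_distrib]
    unfold Fsum Bsum
    ring
  rw [Finset.sum_congr rfl (fun b _ => hb b), Finset.sum_sub_distrib, Finset.sum_const,
    Finset.card_univ, nsmul_eq_mul]
  ring

lemma sameCycle_ofSubtype {p : α → Prop} [DecidablePred p] (f : Equiv.Perm (Subtype p))
    {x y : α} (hx : p x) (hy : p y) :
    (Equiv.Perm.ofSubtype f).SameCycle x y ↔ f.SameCycle ⟨x, hx⟩ ⟨y, hy⟩ := by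
  constructor
  · rintro ⟨i, h⟩
    refine ⟨i, ?_⟩
    rw [← map_zpow, Equiv.Perm.ofSubtype_apply_of_mem _ hx] at h
    exact Subtype.ext h
  · rintro ⟨i, h⟩
    exact ⟨i, by rw [← map_zpow, Equiv.Perm.ofSubtype_apply_of_mem _ hx, h]⟩

lemma sameCycle_fixed {σ : Equiv.Perm α} {x y : α} (hfix : σ x = x)
    (h : σ.SameCycle x y) : x = y := by
  obtain ⟨i, hi⟩ := h
  rw [Equiv.Perm.zpow_apply_eq_self_of_apply_eq_self hfix] at hi
  exact hi

lemma Bsum_eq (R : Finset α) (b : α) :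
    Bsum R b = Fsum (R.subtype (fun x => x ≠ b)) := by
  unfold Bsum Fsum
  symm
  refine Finset.sum_bij' (i := fun (δ' : Equiv.Perm {x : α // x ≠ b}) _ =>
      Equiv.Perm.ofSubtype δ')
    (j := fun δ hδ => δ.subtypePerm (p := fun x => x ≠ b) (fun x => by
      have h1 : δ b = b := (Finset.mem_filter.1 hδ).2.1
      constructor
      · intro hx hc
        exact hx (by rw [hc, h1])
      · intro hx hc
        exact hx (δ.injective (hc.trans h1.symm))))
    ?_ ?_ ?_ ?_ ?_
  · -- hi : maps into B set
    intro δ' hδ'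
    obtain ⟨-, h1, h2⟩ := Finset.mem_filter.1 hδ'
    refine Finset.mem_filter.2 ⟨Finset.mem_univ _, ?_, ?_, ?_⟩
    · exact Equiv.Perm.ofSubtype_apply_of_not_mem δ' (by simp)
    · intro x hx
      rw [Equiv.Perm.ofSubtype_apply_of_mem δ' hx]
      intro hc
      exact h1 ⟨x, hx⟩ (Subtype.ext hc)
    · intro x hx y hy hxy hc
      by_cases hxb : x = b
      · subst hxb
        exact hxy (sameCycle_fixed (Equiv.Perm.ofSubtype_apply_of_not_mem δ' (by simp)) hc)
      · by_cases hyb : y = b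
        · subst hyb
          exact hxy (sameCycle_fixed
            (Equiv.Perm.ofSubtype_apply_of_not_mem δ' (by simp)) hc.symm).symm
        · exact h2 ⟨x, hxb⟩ (Finset.mem_subtype.2 hx) ⟨y, hyb⟩ (Finset.mem_subtype.2 hy)
            (by simpa [Subtype.ext_iff] using hxy)
            ((sameCycle_ofSubtype δ' hxb hyb).1 hc)
  · -- hj : restriction lands in Good set
    intro δ hδ
    obtain ⟨-, h1, h2, h3⟩ := Finset.mem_filter.1 hδ
    refine Finset.mem_filter.2 ⟨Finset.mem_univ _, ?_, ?_⟩
    · rintro ⟨x, hx⟩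
      simp only [Equiv.Perm.subtypePerm_apply, ne_eq, Subtype.mk.injEq]
      exact h2 x hx
    · rintro ⟨x, hx⟩ hxR ⟨y, hy⟩ hyR hxy hc
      have hxR' : x ∈ R := Finset.mem_subtype.1 hxR
      have hyR' : y ∈ R := Finset.mem_subtype.1 hyR
      refine h3 x hxR' y hyR' (by simpa [Subtype.ext_iff] using hxy) ?_
      obtain ⟨i, hi⟩ := hc
      rw [Equiv.Perm.subtypePerm_zpow] at hi
      exact ⟨i, by simpa [Subtype.ext_iff] using hi⟩
  · -- left_inv
    intro δ' hδ'
    apply Equiv.ext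
    rintro ⟨x, hx⟩
    apply Subtype.ext
    simp [Equiv.Perm.subtypePerm_apply, Equiv.Perm.ofSubtype_apply_of_mem δ' hx]
  · -- right_inv
    intro δ hδ
    have h1 : δ b = b := (Finset.mem_filter.1 hδ).2.1
    apply Equiv.ext
    intro x
    by_cases hx : x = b
    · rw [Equiv.Perm.ofSubtype_apply_of_not_mem (p := fun y => y ≠ b) _ (by simpa using hx),
        hx, h1]
    · rw [Equiv.Perm.ofSubtype_apply_of_mem (p := fun y => y ≠ b) _ hx,
        Equiv.Perm.subtypePerm_apply]
  · -- values
    intro δ' hδ'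
    rw [Equiv.Perm.sign_ofSubtype]

/-! ### Fin-level instantiation -/

abbrev Spec (m r : ℕ) : Finset (Fin m) :=
  (Finset.univ : Finset (Fin m)).filter (fun x : Fin m => (x : ℕ) < r)

lemma mem_Spec {m r : ℕ} {x : Fin m} : x ∈ Spec m r ↔ (x : ℕ) < r := by
  simp [Spec]

noncomputable def Phi (m r : ℕ) : ℤ := Fsum (Spec m r)

lemma succAbove_val (k : ℕ) (b : Fin (k+1)) (i : Fin k) :
    ((b.succAbove i : Fin (k+1)) : ℕ) = if (i : ℕ) < (b : ℕ) then (i : ℕ) else (i : ℕ) + 1 := by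
  rcases lt_or_ge (Fin.castSucc i) b with h | h
  · rw [Fin.succAbove_of_castSucc_lt _ _ h, if_pos (by simpa [Fin.lt_def] using h)]
    rfl
  · rw [Fin.succAbove_of_le_castSucc _ _ h, if_neg (by simpa [Fin.le_def] using h)]
    rfl

lemma Phi_zero (r : ℕ) : Phi 0 r = 1 := by
  unfold Phi Fsum
  have hu : (Finset.univ : Finset (Equiv.Perm (Fin 0))).filter
      (fun σ => Good (Spec 0 r) σ)
      = {1} := by
    apply Finset.eq_singleton_iff_unique_mem.2
    constructor
    · refine Finset.mem_filter.2 ⟨Finset.mem_univ _, ⟨fun x => x.elim0, fun x hx => x.elim0⟩⟩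
    · intro σ _
      apply Equiv.ext; intro x; exact x.elim0
  rw [hu, Finset.sum_singleton]
  simp

lemma Phi_one (r : ℕ) : Phi 1 r = 0 := by
  unfold Phi Fsum
  have hu : (Finset.univ : Finset (Equiv.Perm (Fin 1))).filter
      (fun σ => Good (Spec 1 r) σ)
      = ∅ := by
    apply Finset.eq_empty_of_forall_notMem
    intro σ hσ
    obtain ⟨-, h1, -⟩ := Finset.mem_filter.1 hσ
    exact h1 0 (Subsingleton.elim _ _)
  rw [hu, Finset.sum_empty]

lemma Phi_allspecial (m r : ℕ) (hm : 1 ≤ m) (hr : m ≤ r) : Phi m r = 0 := by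
  unfold Phi Fsum
  rw [show ((Finset.univ : Finset (Equiv.Perm (Fin m))).filter
      (fun σ => Good (Spec m r) σ)) = ∅ from ?_, Finset.sum_empty]
  apply Finset.eq_empty_of_forall_notMem
  intro σ hσ
  obtain ⟨-, h1, h2⟩ := Finset.mem_filter.1 hσ
  have h0 : (0 : ℕ) < m := hm
  set x : Fin m := ⟨0, h0⟩
  exact h2 x (mem_Spec.2 (lt_of_lt_of_le x.isLt hr))
    (σ x) (mem_Spec.2 (lt_of_lt_of_le (σ x).isLt hr))
    (fun h => h1 x h.symm) ⟨1, by simp⟩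

lemma Phi_option (m r : ℕ) (hrm : r ≤ m) :
    Phi (m+1) r = Fsum ((Spec m r).image (some : Fin m → Option (Fin m))) := by
  unfold Phi
  apply (Fsum_equiv (finSuccEquivLast) _ _ ?_).symm
  intro x
  induction x using Fin.lastCases with
  | last =>
      simp only [finSuccEquivLast_last, Finset.mem_filter, Finset.mem_univ, true_and,
        Fin.val_last]
      constructor
      · intro h; omega
      · intro h
        exfalso
        obtain ⟨y, -, hy⟩ := Finset.mem_image.1 h
        exact Option.some_ne_none _ hy
  | cast i =>
      simp only [finSuccEquivLast_castSucc, Finset.mem_filter, Finset.mem_univ, true_and,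
        Fin.coe_castSucc]
      rw [Finset.mem_image]
      constructor
      · intro h
        exact ⟨i, Finset.mem_filter.2 ⟨Finset.mem_univ _, h⟩, rfl⟩
      · rintro ⟨y, hy, hy2⟩
        obtain rfl : y = i := by simpa using hy2
        exact (Finset.mem_filter.1 hy).2

lemma Bsum_phi (k r : ℕ) (b : Fin (k+1)) :
    Bsum (Spec (k+1) r) b
      = Phi k (if (b : ℕ) < r then r - 1 else r) := by
  rw [Bsum_eq]
  unfold Phi
  set r' := if (b : ℕ) < r then r - 1 else r with hr'
  apply Fsum_equiv (finSuccAboveEquiv b)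
  intro i
  simp only [Finset.mem_filter, Finset.mem_univ, true_and, finSuccAboveEquiv_apply,
    Finset.mem_subtype]
  rw [succAbove_val]
  have hb := b.isLt
  have hi := i.isLt
  rw [hr']
  split_ifs <;> omega

lemma card_filter_lt (n r : ℕ) (h : r ≤ n) : (Spec n r).card = r := by
  have : (Spec n r).card = (Finset.range r).card := by
    refine Finset.card_bij' (fun (x : Fin n) _ => (x : ℕ))
      (fun a ha => (⟨a, lt_of_lt_of_le (Finset.mem_range.1 ha) h⟩ : Fin n)) ?_ ?_ ?_ ?_
    · intro a ha
      exact Finset.mem_range.2 (mem_Spec.1 ha)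
    · intro a ha
      exact mem_Spec.2 (Finset.mem_range.1 ha)
    · intro a ha; rfl
    · intro a ha; rfl
  rw [this, Finset.card_range]

lemma Phi_rec (k r : ℕ) (hrk : r ≤ k + 1) :
    Phi (k+2) r = -((k:ℤ)+1) * Phi (k+1) r - r * Phi k (r-1)
      - ((k:ℤ) + 1 - r) * Phi k r := by
  have h1' : Phi (k+2) r = Fsum ((Spec (k+1) r).image
      (some : Fin (k+1) → Option (Fin (k+1)))) := Phi_option (k+1) r hrk
  rw [h1', Fsum_option]
  have h2 : ∀ b : Fin (k+1), Bsum (Spec (k+1) r) b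
      = if (b : ℕ) < r then Phi k (r-1) else Phi k r := by
    intro b
    rw [Bsum_phi]
    by_cases hb : (b : ℕ) < r
    · rw [if_pos hb, if_pos hb]
    · rw [if_neg hb, if_neg hb]
  rw [Finset.sum_congr rfl (fun b _ => h2 b), Finset.sum_ite, Finset.sum_const,
    Finset.sum_const]
  have hc1 : (Finset.univ.filter (fun b : Fin (k+1) => (b : ℕ) < r)).card = r :=
    card_filter_lt (k+1) r hrk
  have hcadd := Finset.card_filter_add_card_filter_not
    (s := (Finset.univ : Finset (Fin (k+1)))) (p := fun b : Fin (k+1) => (b : ℕ) < r)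
  have hc2 : (Finset.univ.filter (fun b : Fin (k+1) => ¬ (b : ℕ) < r)).card = k + 1 - r := by
    rw [hc1, Finset.card_univ, Fintype.card_fin] at hcadd
    omega
  rw [hc1, hc2, Fintype.card_fin]
  have hP : Fsum (Spec (k+1) r) = Phi (k+1) r := rfl
  rw [nsmul_eq_mul, nsmul_eq_mul, hP]
  have hcast : ((k + 1 - r : ℕ) : ℤ) = (k : ℤ) + 1 - r := by
    push_cast [Nat.cast_sub hrk]
    ring
  rw [hcast]
  push_cast
  ring

/-! ### arithmetic layer -/

noncomputable def psi (r n : ℕ) : ℤ := (-1)^n * Phi (r+n) r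

lemma psi_rec (r n : ℕ) (hr : 1 ≤ r) :
    psi r (n+2) = ((r:ℤ)+(n:ℤ)+1) * psi r (n+1) + (r:ℤ) * psi (r-1) (n+1)
      - ((n:ℤ)+1) * psi r n := by
  have h := Phi_rec (r+n) r (by omega)
  push_cast at h
  unfold psi
  have e1 : r + (n+2) = (r+n)+2 := by omega
  have e2 : (r-1) + (n+1) = r + n := by omega
  have e3 : r + (n+1) = (r+n)+1 := by omega
  rw [e1, e2, e3, h]
  push_cast
  ring

lemma psi_zero_of_all_special (r : ℕ) (hr : 1 ≤ r) : psi r 0 = 0 := by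
  unfold psi
  rw [Nat.add_zero, Phi_allspecial r r hr le_rfl]
  ring

lemma psi_zero_zero : psi 0 0 = 1 := by
  unfold psi
  rw [Nat.add_zero, Phi_zero]
  ring

lemma psi_zero_one : psi 0 1 = 0 := by
  unfold psi
  rw [Nat.zero_add, Phi_one]
  ring

lemma psi_one (r : ℕ) (hr : 2 ≤ r) : psi r 1 = 0 := by
  unfold psi
  have h := Phi_rec (r-1) r (by omega)
  have e1 : r - 1 + 2 = r + 1 := by omega
  have e2 : r - 1 + 1 = r := by omega
  rw [e1, e2] at h
  rw [h, Phi_allspecial r r (by omega) le_rfl,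
    Phi_allspecial (r-1) (r-1) (by omega) le_rfl,
    Phi_allspecial (r-1) r (by omega) (by omega)]
  ring

lemma psi_rec0 (n : ℕ) :
    psi 0 (n+2) = ((n:ℤ)+1) * psi 0 (n+1) - ((n:ℤ)+1) * psi 0 n := by
  have h := Phi_rec n 0 (by omega)
  push_cast at h
  unfold psi
  rw [Nat.zero_add, Nat.zero_add, Nat.zero_add, h]
  push_cast
  ring

lemma psi_zero_vals : ∀ n, psi 0 (n+1) = -(n:ℤ) + 1 - 1 ∧ psi 0 (n+2) = -((n:ℤ)+1) := by
  intro n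
  induction n with
  | zero =>
      refine ⟨by rw [psi_zero_one]; simp, ?_⟩
      rw [psi_rec0 0, psi_zero_one, psi_zero_zero]
      norm_num
  | succ m ih =>
      obtain ⟨h1, h2⟩ := ih
      refine ⟨by rw [h2]; push_cast; ring, ?_⟩
      rw [psi_rec0 (m+1), h2, h1]
      push_cast
      ring

lemma psi_zero_val (n : ℕ) : psi 0 (n+1) = -(n:ℤ) := by
  have := (psi_zero_vals n).1
  linarith

lemma psi_one_vals : ∀ n, psi 1 n = (n:ℤ) := by
  have base0 : psi 1 0 = 0 := psi_zero_of_all_special 1 le_rfl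
  have base1 : psi 1 1 = 1 := by
    unfold psi
    have h := Phi_rec 0 1 (by omega)
    norm_num at h
    rw [show (1:ℕ) + 1 = 2 by rfl, h, Phi_one, Phi_zero]
    ring
  have step : ∀ n, psi 1 n = (n:ℤ) ∧ psi 1 (n+1) = (n:ℤ)+1 := by
    intro n
    induction n with
    | zero => exact ⟨base0, by rw [base1]; norm_num⟩
    | succ m ih =>
        obtain ⟨h1, h2⟩ := ih
        refine ⟨by rw [h2]; push_cast; ring, ?_⟩
        rw [psi_rec 1 m le_rfl, h2, h1]
        simp only [Nat.sub_self, psi_zero_val]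
        push_cast
        ring
  exact fun n => (step n).1

lemma psi_main : ∀ r, 1 ≤ r → ∀ n,
    (0 ≤ psi r n ∧ (n < r → psi r n = 0) ∧ (r ≤ n → 0 < psi r n)) := by
  intro r
  induction r with
  | zero => intro h; exact absurd h (by omega)
  | succ r ihr =>
      intro _
      by_cases hr0 : r = 0
      · subst hr0
        intro n
        rw [psi_one_vals n]
        refine ⟨by positivity, fun h => ?_, fun h => by exact_mod_cast h⟩
        have : n = 0 := by omega
        simp [this]
      · have hr1 : 1 ≤ r := by omega
        have IH := ihr hr1
        have base0 : psi (r+1) 0 = 0 := psi_zero_of_all_special (r+1) (by omega)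
        have base1 : psi (r+1) 1 = 0 := psi_one (r+1) (by omega)
        have base2 : psi (r+1) 2 = ((r:ℤ)+1) * psi r 1 := by
          have h := psi_rec (r+1) 0 (by omega)
          simp only [Nat.add_sub_cancel] at h
          rw [h, base1, base0]
          push_cast
          ring
        have hAA : ∀ n, ((0 ≤ psi (r+1) n ∧ (n < r+1 → psi (r+1) n = 0) ∧
              (r+1 ≤ n → 0 < psi (r+1) n) ∧ psi (r+1) n ≤ psi (r+1) (n+1)) ∧
            (0 ≤ psi (r+1) (n+1) ∧ (n+1 < r+1 → psi (r+1) (n+1) = 0) ∧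
              (r+1 ≤ n+1 → 0 < psi (r+1) (n+1)) ∧ psi (r+1) (n+1) ≤ psi (r+1) (n+2))) := by
          intro n
          induction n with
          | zero =>
              refine ⟨⟨by rw [base0], fun _ => base0,
                  fun h => absurd h (by omega), by rw [base0, base1]⟩,
                ⟨by rw [base1], fun _ => base1, fun h => absurd h (by omega), ?_⟩⟩
              rw [base1, base2]
              exact mul_nonneg (by positivity) (IH 1).1
          | succ m ihm =>
              obtain ⟨hAm, hAm1⟩ := ihm
              obtain ⟨hm_nonneg, hm_zero, hm_pos, hm_mono⟩ := hAm
              obtain ⟨h1_nonneg, h1_zero, h1_pos, h1_mono⟩ := hAm1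
              have E : psi (r+1) (m+2) = ((r:ℤ)+1+(m:ℤ)+1) * psi (r+1) (m+1)
                  + ((r:ℤ)+1) * psi r (m+1) - ((m:ℤ)+1) * psi (r+1) m := by
                have h := psi_rec (r+1) m (by omega)
                simp only [Nat.add_sub_cancel] at h
                rw [h]
                push_cast
                ring
              have E' : psi (r+1) (m+3) = ((r:ℤ)+1+(m:ℤ)+2) * psi (r+1) (m+2)
                  + ((r:ℤ)+1) * psi r (m+2) - ((m:ℤ)+2) * psi (r+1) (m+1) := by
                have h := psi_rec (r+1) (m+1) (by omega)
                simp only [Nat.add_sub_cancel] at h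
                rw [show m+1+2 = m+3 from rfl, show m+1+1 = m+2 from rfl] at h
                rw [h]
                push_cast
                ring
              have hr_nonneg1 := (IH (m+1)).1
              have hr_nonneg2 := (IH (m+2)).1
              have hpos : r+1 ≤ m+2 → 0 < psi (r+1) (m+2) := by
                intro hle
                by_cases hc : r+1 ≤ m+1
                · have p1 := h1_pos hc
                  have t1 : ((m:ℤ)+1) * psi (r+1) m ≤ ((m:ℤ)+1) * psi (r+1) (m+1) :=
                    mul_le_mul_of_nonneg_left hm_mono (by positivity)
                  have t2 : 0 < ((r:ℤ)+1) * psi (r+1) (m+1) :=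
                    mul_pos (by positivity) p1
                  have t3 : 0 ≤ ((r:ℤ)+1) * psi r (m+1) :=
                    mul_nonneg (by positivity) hr_nonneg1
                  nlinarith [E, t1, t2, t3, h1_nonneg]
                · have z1 : psi (r+1) (m+1) = 0 := h1_zero (by omega)
                  have z0 : psi (r+1) m = 0 := hm_zero (by omega)
                  have posr : 0 < psi r (m+1) := (IH (m+1)).2.2 (by omega)
                  have t2 : 0 < ((r:ℤ)+1) * psi r (m+1) := mul_pos (by positivity) posr
                  rw [E, z1, z0]
                  nlinarith [t2]
              have hzero : m+2 < r+1 → psi (r+1) (m+2) = 0 := by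
                intro hlt
                have z1 : psi (r+1) (m+1) = 0 := h1_zero (by omega)
                have z0 : psi (r+1) m = 0 := hm_zero (by omega)
                have zr : psi r (m+1) = 0 := (IH (m+1)).2.1 (by omega)
                rw [E, z1, z0, zr]
                ring
              have hnonneg : 0 ≤ psi (r+1) (m+2) := by
                by_cases hc : r+1 ≤ m+2
                · exact le_of_lt (hpos hc)
                · rw [hzero (by omega)]
              have hmono : psi (r+1) (m+2) ≤ psi (r+1) (m+3) := by
                have t1 : ((m:ℤ)+2) * psi (r+1) (m+1) ≤ ((m:ℤ)+2) * psi (r+1) (m+2) :=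
                  mul_le_mul_of_nonneg_left h1_mono (by positivity)
                have t2 : ((m:ℤ)+2) * psi (r+1) (m+2) ≤ ((r:ℤ)+(m:ℤ)+2) * psi (r+1) (m+2) := by
                  apply mul_le_mul_of_nonneg_right _ hnonneg
                  have : (0:ℤ) ≤ (r:ℤ) := by positivity
                  linarith
                have t3 : 0 ≤ ((r:ℤ)+1) * psi r (m+2) :=
                  mul_nonneg (by positivity) hr_nonneg2
                nlinarith [E', t1, t2, t3]
              exact ⟨⟨h1_nonneg, h1_zero, h1_pos, h1_mono⟩, hnonneg, hzero, hpos, hmono⟩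
        intro n
        obtain ⟨hA, -⟩ := hAA n
        exact ⟨hA.1, hA.2.1, hA.2.2.1⟩

end RDer

open Finset in
lemma sum_sign_split {γ : Type*} [Fintype γ] [DecidableEq γ] (s : Finset (Equiv.Perm γ)) :
    ∑ σ ∈ s, (Equiv.Perm.sign σ : ℤ)
      = ((s.filter (fun σ => parity σ = 0)).card : ℤ)
        - ((s.filter (fun σ => parity σ = 1)).card : ℤ) := by
  rw [← Finset.sum_filter_add_sum_filter_not s (fun σ => parity σ = 0)
    (fun σ => (Equiv.Perm.sign σ : ℤ))]
  have h1 : ∀ σ ∈ s.filter (fun σ => parity σ = 0), (Equiv.Perm.sign σ : ℤ) = 1 := by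
    intro σ hσ
    have hp := (Finset.mem_filter.1 hσ).2
    unfold parity at hp
    by_cases hs : Equiv.Perm.sign σ = 1
    · simp [hs]
    · rw [if_neg hs] at hp
      exact absurd hp (by norm_num)
  have h2 : s.filter (fun σ => ¬ parity σ = 0) = s.filter (fun σ => parity σ = 1) := by
    apply Finset.filter_congr
    intro σ _
    unfold parity
    by_cases hs : Equiv.Perm.sign σ = 1 <;> simp [hs]
  have h3 : ∀ σ ∈ s.filter (fun σ => parity σ = 1), (Equiv.Perm.sign σ : ℤ) = -1 := by
    intro σ hσ
    have hp := (Finset.mem_filter.1 hσ).2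
    unfold parity at hp
    by_cases hs : Equiv.Perm.sign σ = 1
    · rw [if_pos hs] at hp
      exact absurd hp (by norm_num)
    · rcases Int.units_eq_one_or (Equiv.Perm.sign σ) with h | h
      · exact absurd h hs
      · simp [h]
  rw [Finset.sum_congr rfl h1, h2, Finset.sum_congr rfl h3, Finset.sum_const, Finset.sum_const]
  simp only [nsmul_eq_mul, mul_one, mul_neg_one]
  ring

lemma rDerSet_eq (r n : ℕ) : rDerSet r n
    = Finset.univ.filter (fun σ => RDer.Good (RDer.Spec (r+n) r) σ) := by
  unfold rDerSet
  apply Finset.filter_congr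
  intro σ _
  constructor
  · rintro ⟨h1, h2⟩
    exact ⟨h1, fun x hx y hy => h2 x y (RDer.mem_Spec.1 hx) (RDer.mem_Spec.1 hy)⟩
  · rintro ⟨h1, h2⟩
    exact ⟨h1, fun x y hx hy => h2 x (RDer.mem_Spec.2 hx) y (RDer.mem_Spec.2 hy)⟩

theorem even_minus_odd_rDerangements_pos (r n : ℕ) (hr : 2 ≤ r) (hn : r ≤ n) :
    0 < (-1 : ℤ) ^ n * ((Dri r 0 n : ℤ) - (Dri r 1 n : ℤ)) := by
  have hkey : ((Dri r 0 n : ℤ) - (Dri r 1 n : ℤ)) = RDer.Phi (r+n) r := by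
    unfold Dri
    rw [← sum_sign_split (rDerSet r n), rDerSet_eq]
    rfl
  rw [hkey]
  have h := (RDer.psi_main r (by omega) n).2.2 hn
  unfold RDer.psi at h
  exact h
end
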